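/- arXiv:1406.0767 — 5 statements merged into one kernel-verified Lean document; each statement's English description precedes it below -/
import Mathlib

section
/- If G is a vertex-transitive digraph then R_D(G) = log₂|V(G)| − Γ(G), where Γ(G) = lim_{t→∞} (1/t)·log₂ α(G^{∧t}). -/
open Filter

/-- The AND product of two digraphs given by edge relations `E` and `F`. -/
def andProd {V W : Type*} (E : V → V → Prop) (F : W → W → Prop) :
    V × W → V × W → Prop :=
  fun p q => p ≠ q ∧ (p.1 = q.1 ∨ E p.1 q.1) ∧ (p.2 = q.2 ∨ F p.2 q.2)

/-- The `t`-th AND power of the digraph given by edge relation `E`. -/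
def andPow {V : Type*} (E : V → V → Prop) (t : ℕ) :
    (Fin t → V) → (Fin t → V) → Prop :=
  fun x y => x ≠ y ∧ ∀ i, x i = y i ∨ E (x i) (y i)

/-- Chromatic number of a digraph: minimum number of classes in a partition of the
vertex set into sets containing no edge in either direction. -/
noncomputable def chromNum {V : Type*} (E : V → V → Prop) : ℕ :=
  sInf {n : ℕ | ∃ c : V → Fin n, ∀ u v : V, E u v → c u ≠ c v}

/-- Independence number of a digraph: maximum size of a vertex set with no edge
in either direction between its elements. -/
noncomputable def indepNum {V : Type*} (E : V → V → Prop) : ℕ :=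
  sSup {n : ℕ | ∃ S : Finset V, S.card = n ∧ ∀ u ∈ S, ∀ v ∈ S, u ≠ v → ¬ E u v}

/-- A set of vertices is acyclic if the induced subdigraph contains no directed
closed walk (equivalently, for finite digraphs, no directed cycle). -/
def IsAcyclicSet {V : Type*} (E : V → V → Prop) (U : Set V) : Prop :=
  ¬ ∃ (n : ℕ) (c : Fin (n + 1) → V), (∀ i, c i ∈ U) ∧ ∀ i, E (c i) (c (i + 1))

/-- Dichromatic number: minimum number of acyclic sets covering the vertex set. -/
noncomputable def dichromNum {V : Type*} (E : V → V → Prop) : ℕ :=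
  sInf {n : ℕ | ∃ c : V → Fin n, ∀ k : Fin n, IsAcyclicSet E {v | c v = k}}

/-- Acyclicity number: maximum size of an acyclic subset of the vertex set. -/
noncomputable def acycNum {V : Type*} (E : V → V → Prop) : ℕ :=
  sSup {n : ℕ | ∃ U : Finset V, U.card = n ∧ IsAcyclicSet E (↑U : Set V)}

/-- Fractional dichromatic number: minimum total weight of a fractional directed
coloring, i.e. nonnegative weights on acyclic sets covering each vertex with
total weight at least 1. -/
noncomputable def fracDichromNum {V : Type*} [Fintype V] (E : V → V → Prop) : ℝ :=
  letI := Classical.decEq V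
  sInf {w : ℝ | ∃ g : Finset V → ℝ,
    (∀ U, 0 ≤ g U) ∧
    (∀ U : Finset V, ¬ IsAcyclicSet E (↑U : Set V) → g U = 0) ∧
    (∀ v : V, 1 ≤ ∑ U : Finset V, (if v ∈ U then g U else 0)) ∧
    w = ∑ U : Finset V, g U}

/-- A digraph is vertex-transitive if any vertex can be mapped to any other by an
automorphism. -/
def VertexTransitive {V : Type*} (E : V → V → Prop) : Prop :=
  ∀ u v : V, ∃ σ : Equiv.Perm V, (∀ a b : V, E (σ a) (σ b) ↔ E a b) ∧ σ u = v

/-- The (undirected, viewed as symmetric) closure graph of a digraph: distinct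
vertices `a, b` are adjacent iff `(a,b)` or `(b,a)` is an edge, or `a` and `b`
have a common out-neighbour. -/
def closureRel {V : Type*} (E : V → V → Prop) : V → V → Prop :=
  fun a b => a ≠ b ∧ (E a b ∨ E b a ∨ ∃ v, E a v ∧ E b v)


section Basic
variable {W : Type*} [Fintype W] (R : W → W → Prop)


def Indep (S : Finset W) : Prop := ∀ u ∈ S, ∀ v ∈ S, u ≠ v → ¬ R u v

lemma bddAbove_indepSet :
    BddAbove {n : ℕ | ∃ S : Finset W, S.card = n ∧ ∀ u ∈ S, ∀ v ∈ S, u ≠ v → ¬ R u v} := by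
  refine ⟨Fintype.card W, fun n hn => ?_⟩
  obtain ⟨S, hS, -⟩ := hn
  simpa [← hS, ← Finset.card_univ] using Finset.card_le_card (Finset.subset_univ S)

lemma card_le_indepNum {S : Finset W} (h : Indep R S) : S.card ≤ indepNum R :=
  le_csSup (bddAbove_indepSet R) ⟨S, rfl, h⟩

lemma exists_indep_card : ∃ S : Finset W, Indep R S ∧ S.card = indepNum R := by
  have hne : {n : ℕ | ∃ S : Finset W, S.card = n ∧ ∀ u ∈ S, ∀ v ∈ S, u ≠ v → ¬ R u v}.Nonempty :=
    ⟨0, ∅, by simp, by simp⟩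
  obtain ⟨S, hS, hind⟩ := Nat.sSup_mem hne (bddAbove_indepSet R)
  exact ⟨S, hind, hS⟩

lemma one_le_indepNum [Nonempty W] : 1 ≤ indepNum R := by
  have := card_le_indepNum R (S := {Classical.arbitrary W}) (by intro u hu v hv huv; simp_all)
  simpa using this

lemma indepNum_le_card : indepNum R ≤ Fintype.card W := by
  obtain ⟨S, -, hS⟩ := exists_indep_card R
  rw [← hS, ← Finset.card_univ]
  exact Finset.card_le_card (Finset.subset_univ S)

lemma chromNum_le {m : ℕ} (c : W → Fin m) (hc : ∀ u v : W, R u v → c u ≠ c v) :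
    chromNum R ≤ m := Nat.sInf_le ⟨c, hc⟩

lemma exists_coloring (hR : ∀ u v, R u v → u ≠ v) :
    ∃ c : W → Fin (chromNum R), ∀ u v : W, R u v → c u ≠ c v := by
  have hne : {n : ℕ | ∃ c : W → Fin n, ∀ u v : W, R u v → c u ≠ c v}.Nonempty := by
    refine ⟨Fintype.card W, Fintype.equivFin W, fun u v huv => ?_⟩
    simpa using hR u v huv
  exact Nat.sInf_mem hne

lemma card_le_chrom_mul_indep (hR : ∀ u v, R u v → u ≠ v) :
    Fintype.card W ≤ chromNum R * indepNum R := by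
  classical
  obtain ⟨c, hc⟩ := exists_coloring R hR
  have h1 : (Finset.univ : Finset W).card
      = ∑ k : Fin (chromNum R), (Finset.univ.filter fun v => c v = k).card :=
    Finset.card_eq_sum_card_fiberwise (fun x _ => Finset.mem_univ _)
  have h2 : ∀ k : Fin (chromNum R), (Finset.univ.filter fun v => c v = k).card ≤ indepNum R := by
    intro k
    refine card_le_indepNum R ?_
    intro u hu v hv huv hRuv
    simp only [Finset.mem_filter] at hu hv
    exact hc u v hRuv (hu.2.trans hv.2.symm)
  calc Fintype.card W = _ := by rw [← Finset.card_univ, h1]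
    _ ≤ ∑ _k : Fin (chromNum R), indepNum R := Finset.sum_le_sum fun k _ => h2 k
    _ = chromNum R * indepNum R := by simp [Finset.sum_const, mul_comm]

lemma one_le_chromNum [Nonempty W] (hR : ∀ u v, R u v → u ≠ v) : 1 ≤ chromNum R := by
  by_contra h
  push_neg at h
  interval_cases hcn : chromNum R
  · obtain ⟨c, -⟩ := exists_coloring R hR
    rw [hcn] at c
    exact (c (Classical.arbitrary W)).elim0

end Basic

section Cover
variable {W : Type*} [Fintype W] [Nonempty W] (R : W → W → Prop)

/-- Greedy covering by translates of an independent set. -/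
lemma chromNum_le_greedy (hR : ∀ u v, R u v → u ≠ v) (hvt : VertexTransitive R)
    (S : Finset W) (hS : ∀ u ∈ S, ∀ v ∈ S, u ≠ v → ¬ R u v) (hSne : S.Nonempty)
    {K : ℕ} (hK : (Fintype.card W : ℝ) * Real.exp (-(K * S.card / Fintype.card W)) < 1) :
    chromNum R ≤ K := by
  classical
  set N := Fintype.card W with hN
  have hNpos : 0 < N := Fintype.card_pos
  have hScard : S.card ≤ N := by
    simpa [hN, ← Finset.card_univ] using Finset.card_le_card (Finset.subset_univ S)
  set A : Finset (Equiv.Perm W) :=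
    Finset.univ.filter (fun σ => ∀ a b, R (σ a) (σ b) ↔ R a b) with hA
  have hmemA : ∀ σ : Equiv.Perm W, σ ∈ A ↔ ∀ a b, R (σ a) (σ b) ↔ R a b := by
    intro σ; simp [hA]
  have hone : (1 : Equiv.Perm W) ∈ A := by simp [hA]
  have hinv : ∀ σ ∈ A, σ⁻¹ ∈ A := by
    intro σ hσ
    rw [hmemA] at hσ ⊢
    intro a b
    rw [← hσ (σ⁻¹ a) (σ⁻¹ b)]
    simp
  have hmul : ∀ σ ∈ A, ∀ τ ∈ A, σ * τ ∈ A := by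
    intro σ hσ τ hτ
    rw [hmemA] at hσ hτ ⊢
    intro a b
    simp [Equiv.Perm.mul_apply, hσ, hτ]
  -- all fibers of evaluation-at-s have the same size
  have key : ∀ s v : W, ((A.filter fun σ => σ s = v).card) * N = A.card := by
    have hfib : ∀ s v : W,
        (A.filter fun σ => σ s = v).card = (A.filter fun σ => σ s = s).card := by
      intro s v
      obtain ⟨τ, hτprop, hτs⟩ := hvt s v
      have hτA : τ ∈ A := (hmemA τ).2 hτprop
      refine Finset.card_bij' (fun σ _ => τ⁻¹ * σ) (fun σ _ => τ * σ) ?_ ?_ ?_ ?_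
      · intro σ hσ
        obtain ⟨hσA, hσs⟩ := Finset.mem_filter.1 hσ
        exact Finset.mem_filter.2 ⟨hmul _ (hinv τ hτA) _ hσA,
          by simp [Equiv.Perm.mul_apply, hσs, ← hτs]⟩
      · intro σ hσ
        obtain ⟨hσA, hσs⟩ := Finset.mem_filter.1 hσ
        exact Finset.mem_filter.2 ⟨hmul _ hτA _ hσA,
          by simp [Equiv.Perm.mul_apply, hσs, hτs]⟩
      · intro σ _; simp [mul_assoc]
      · intro σ _; simp [← mul_assoc]
    intro s v
    have hsum : A.card = ∑ v : W, (A.filter fun σ => σ s = v).card :=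
      Finset.card_eq_sum_card_fiberwise (fun σ _ => Finset.mem_univ _)
    rw [hsum]
    calc (A.filter fun σ => σ s = v).card * N
        = ∑ _w : W, (A.filter fun σ => σ s = v).card := by
          simp [hN, Finset.card_univ, mul_comm]
      _ = ∑ w : W, (A.filter fun σ => σ s = w).card := by
          refine Finset.sum_congr rfl fun w _ => ?_
          rw [hfib s v, hfib s w]
  -- counting: for fixed s, number of σ with σ s ∈ U
  have key2 : ∀ (s : W) (U : Finset W), (A.filter fun σ => σ s ∈ U).card * N = U.card * A.card := by
    intro s U
    have h1 : (A.filter fun σ => σ s ∈ U).card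
        = ∑ v ∈ U, ((A.filter fun σ => σ s ∈ U).filter fun σ => σ s = v).card :=
      Finset.card_eq_sum_card_fiberwise (fun σ hσ => (Finset.mem_filter.1 hσ).2)
    have h2 : ∀ v ∈ U, ((A.filter fun σ => σ s ∈ U).filter fun σ => σ s = v)
        = A.filter fun σ => σ s = v := by
      intro v hv
      rw [Finset.filter_filter]
      refine Finset.filter_congr fun σ _ => ?_
      constructor
      · exact fun h => h.2
      · exact fun h => ⟨h ▸ hv, h⟩
    rw [h1, Finset.sum_congr rfl fun v hv => by rw [h2 v hv], Finset.sum_mul]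
    rw [Finset.sum_congr rfl fun v hv => key s v, Finset.sum_const, smul_eq_mul]
  -- averaging: some translate covers many points of U
  have cover : ∀ U : Finset W, ∃ σ ∈ A, U.card * S.card ≤ (S.filter fun s => σ s ∈ U).card * N := by
    intro U
    have hsum : ∑ σ ∈ A, U.card * S.card ≤ ∑ σ ∈ A, (S.filter fun s => σ s ∈ U).card * N := by
      have hrhs : ∑ σ ∈ A, (S.filter fun s => σ s ∈ U).card * N
          = ∑ s ∈ S, (A.filter fun σ => σ s ∈ U).card * N := by
        simp only [Finset.card_filter, Finset.sum_mul]
        rw [Finset.sum_comm]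
      rw [hrhs]
      refine le_of_eq ?_
      calc ∑ σ ∈ A, U.card * S.card = A.card * (U.card * S.card) := by
            rw [Finset.sum_const, smul_eq_mul]
        _ = S.card * (U.card * A.card) := by ring
        _ = ∑ s ∈ S, U.card * A.card := by rw [Finset.sum_const, smul_eq_mul]
        _ = ∑ s ∈ S, (A.filter fun σ => σ s ∈ U).card * N :=
            Finset.sum_congr rfl fun s _ => (key2 s U).symm
    exact Finset.exists_le_of_sum_le ⟨1, hone⟩ hsum
  -- one greedy step
  have step : ∀ U : Finset W, ∃ σ ∈ A, (U \ S.image σ).card * N ≤ U.card * (N - S.card) := by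
    intro U
    obtain ⟨σ, hσA, hσ⟩ := cover U
    refine ⟨σ, hσA, ?_⟩
    have himg : U ∩ S.image σ = (S.filter fun s => σ s ∈ U).image σ := by
      ext v
      simp only [Finset.mem_inter, Finset.mem_image, Finset.mem_filter]
      constructor
      · rintro ⟨hvU, s, hsS, rfl⟩; exact ⟨s, ⟨hsS, hvU⟩, rfl⟩
      · rintro ⟨s, ⟨hsS, hsU⟩, rfl⟩; exact ⟨hsU, s, hsS, rfl⟩
    have hcardeq : (U ∩ S.image σ).card = (S.filter fun s => σ s ∈ U).card := by
      rw [himg, Finset.card_image_of_injective _ σ.injective]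
    have hsplit : (U ∩ S.image σ).card + (U \ S.image σ).card = U.card :=
      Finset.card_inter_add_card_sdiff U (S.image σ)
    have h4 : (U ∩ S.image σ).card * N + (U \ S.image σ).card * N = U.card * N := by
      rw [← add_mul, hsplit]
    have h3 : (U \ S.image σ).card * N = U.card * N - (U ∩ S.image σ).card * N := by omega
    rw [h3, Nat.mul_sub]
    apply Nat.sub_le_sub_left
    rw [hcardeq]
    exact hσ
  -- greedy construction
  let g : Finset W → Equiv.Perm W := fun U => (step U).choose
  have hg : ∀ U : Finset W, g U ∈ A ∧ (U \ S.image (g U)).card * N ≤ U.card * (N - S.card) :=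
    fun U => ⟨(step U).choose_spec.1, (step U).choose_spec.2⟩
  let Us : ℕ → Finset W := fun k => Nat.rec Finset.univ (fun _ Uk => Uk \ S.image (g Uk)) k
  have hUs0 : Us 0 = Finset.univ := rfl
  have hUsucc : ∀ k, Us (k+1) = Us k \ S.image (g (Us k)) := fun _ => rfl
  have hcard : ∀ k, (Us k).card * N ^ k ≤ N * (N - S.card) ^ k := by
    intro k
    induction k with
    | zero => simp [hUs0, hN, Finset.card_univ]
    | succ k ih =>
      calc (Us (k+1)).card * N ^ (k+1) = ((Us (k+1)).card * N) * N ^ k := by ring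
        _ ≤ ((Us k).card * (N - S.card)) * N ^ k := Nat.mul_le_mul_right _ ((hg (Us k)).2)
        _ = ((Us k).card * N ^ k) * (N - S.card) := by ring
        _ ≤ (N * (N - S.card) ^ k) * (N - S.card) := Nat.mul_le_mul_right _ ih
        _ = N * (N - S.card) ^ (k+1) := by ring
  have hNR : (0:ℝ) < (N:ℝ) := by exact_mod_cast hNpos
  have hUK : Us K = ∅ := by
    have h1 : ((Us K).card : ℝ) * (N:ℝ) ^ K ≤ (N:ℝ) * ((N:ℝ) - S.card) ^ K := by
      have := hcard K
      have hc : (((N - S.card : ℕ)) : ℝ) = (N : ℝ) - S.card := by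
        rw [Nat.cast_sub hScard]
      calc ((Us K).card : ℝ) * (N:ℝ) ^ K = (((Us K).card * N ^ K : ℕ) : ℝ) := by push_cast; ring
        _ ≤ ((N * (N - S.card) ^ K : ℕ) : ℝ) := by exact_mod_cast this
        _ = (N:ℝ) * ((N:ℝ) - S.card) ^ K := by push_cast [Nat.cast_sub hScard]; ring
    have h2 : ((N : ℝ) - S.card) ≤ (N:ℝ) * Real.exp (-((S.card:ℝ) / N)) := by
      have h := Real.add_one_le_exp (-((S.card:ℝ) / N))
      have h' := mul_le_mul_of_nonneg_left h (le_of_lt hNR)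
      have heq : (N:ℝ) * (-((S.card:ℝ)/N) + 1) = (N:ℝ) - S.card := by field_simp; ring
      linarith
    have hsub : (0:ℝ) ≤ (N:ℝ) - S.card := by
      have : ((S.card : ℕ) : ℝ) ≤ (N:ℝ) := by exact_mod_cast hScard
      linarith
    have h3 : ((N:ℝ) - S.card) ^ K ≤ ((N:ℝ) * Real.exp (-((S.card:ℝ)/N))) ^ K :=
      pow_le_pow_left₀ hsub h2 K
    have h4 : ((Us K).card : ℝ) * (N:ℝ) ^ K
        ≤ ((N:ℝ) * Real.exp (-((S.card:ℝ)/N)) ^ K) * (N:ℝ) ^ K := by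
      calc ((Us K).card : ℝ) * (N:ℝ) ^ K ≤ (N:ℝ) * ((N:ℝ) - S.card) ^ K := h1
        _ ≤ (N:ℝ) * ((N:ℝ) * Real.exp (-((S.card:ℝ)/N))) ^ K :=
            mul_le_mul_of_nonneg_left h3 (le_of_lt hNR)
        _ = ((N:ℝ) * Real.exp (-((S.card:ℝ)/N)) ^ K) * (N:ℝ) ^ K := by rw [mul_pow]; ring
    have h5 : ((Us K).card : ℝ) ≤ (N:ℝ) * Real.exp (-((S.card:ℝ)/N)) ^ K :=
      le_of_mul_le_mul_right h4 (pow_pos hNR K)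
    have h6 : Real.exp (-((S.card:ℝ)/N)) ^ K = Real.exp (-((K:ℝ) * S.card / N)) := by
      rw [← Real.exp_nat_mul]
      ring_nf
    rw [h6] at h5
    have h7 : ((Us K).card : ℝ) < 1 := lt_of_le_of_lt h5 hK
    have : (Us K).card = 0 := by exact_mod_cast Nat.lt_one_iff.1 (by exact_mod_cast h7)
    exact Finset.card_eq_zero.1 this
  have hcov : ∀ v : W, ∃ k, k < K ∧ v ∈ S.image (g (Us k)) := by
    intro v
    by_contra hcon
    push_neg at hcon
    have haux : ∀ k, k ≤ K → v ∈ Us k := by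
      intro k
      induction k with
      | zero => intro _; simp [hUs0]
      | succ k ih =>
        intro hk
        rw [hUsucc k, Finset.mem_sdiff]
        exact ⟨ih (by omega), hcon k (by omega)⟩
    have := haux K le_rfl
    rw [hUK] at this
    exact absurd this (Finset.notMem_empty v)
  let c : W → Fin K := fun v => ⟨(hcov v).choose, (hcov v).choose_spec.1⟩
  refine Nat.sInf_le ⟨c, ?_⟩
  intro u v huv hcuv
  have hu := (hcov u).choose_spec.2
  have hv := (hcov v).choose_spec.2
  have hkk : (hcov u).choose = (hcov v).choose := by
    simpa [c] using congrArg Fin.val hcuv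
  rw [hkk] at hu
  obtain ⟨a, haS, hau⟩ := Finset.mem_image.1 hu
  obtain ⟨b, hbS, hbv⟩ := Finset.mem_image.1 hv
  have hab : a ≠ b := by
    rintro rfl
    apply hR u v huv
    rw [← hau]
    exact hbv
  have hσA := (hg (Us (hcov v).choose)).1
  have hRab : R a b := by
    have hRuv : R (g (Us (hcov v).choose) a) (g (Us (hcov v).choose) b) := by
      rw [hau, hbv]; exact huv
    exact ((hmemA _).1 hσA a b).1 hRuv
  exact hS a haS b hbS hab hRab


lemma chrom_mul_indep_le (hR : ∀ u v, R u v → u ≠ v) (hvt : VertexTransitive R) :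
    (chromNum R : ℝ) * indepNum R ≤ (Fintype.card W : ℝ) * (Real.log (Fintype.card W) + 1) := by
  classical
  obtain ⟨S, hSind, hScard⟩ := exists_indep_card R
  have hα1 : 1 ≤ indepNum R := one_le_indepNum R
  have hSne : S.Nonempty := Finset.card_pos.1 (by omega)
  set N := Fintype.card W with hN
  have hNpos : 0 < N := Fintype.card_pos
  have hNR : (0:ℝ) < N := by exact_mod_cast hNpos
  have hN1 : (1:ℝ) ≤ N := by exact_mod_cast hNpos
  have hαR : (0:ℝ) < (indepNum R : ℝ) := by exact_mod_cast hα1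
  set x : ℝ := ((N:ℝ) / indepNum R) * Real.log N with hx
  have hlogN : 0 ≤ Real.log N := Real.log_nonneg hN1
  have hxnn : 0 ≤ x := mul_nonneg (div_nonneg hNR.le hαR.le) hlogN
  have hKx : x < ((⌊x⌋₊ + 1 : ℕ) : ℝ) := by push_cast; exact Nat.lt_floor_add_one x
  have hxα : x * indepNum R = N * Real.log N := by rw [hx]; field_simp
  have hScR : (S.card : ℝ) = (indepNum R : ℝ) := by exact_mod_cast hScard
  have hK : (N:ℝ) * Real.exp (-(((⌊x⌋₊ + 1 : ℕ):ℝ) * S.card / N)) < 1 := by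
    have hlt : Real.log N < ((⌊x⌋₊ + 1 : ℕ):ℝ) * S.card / N := by
      rw [hScR]
      have h1 : x * (indepNum R : ℝ) < ((⌊x⌋₊ + 1 : ℕ):ℝ) * indepNum R :=
        mul_lt_mul_of_pos_right hKx hαR
      rw [hxα] at h1
      rw [lt_div_iff₀ hNR]
      linarith
    have h2 := Real.exp_lt_exp.2 (neg_lt_neg hlt)
    calc (N:ℝ) * Real.exp (-(((⌊x⌋₊ + 1 : ℕ):ℝ) * S.card / N))
        < N * Real.exp (-(Real.log N)) := mul_lt_mul_of_pos_left h2 hNR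
      _ = 1 := by rw [Real.exp_neg, Real.exp_log hNR, mul_inv_cancel₀ hNR.ne']
  have hchrom : chromNum R ≤ ⌊x⌋₊ + 1 := chromNum_le_greedy R hR hvt S hSind hSne hK
  have hKle : ((⌊x⌋₊ + 1 : ℕ):ℝ) ≤ x + 1 := by push_cast; linarith [Nat.floor_le hxnn]
  have hαN : (indepNum R : ℝ) ≤ N := by exact_mod_cast indepNum_le_card R
  calc (chromNum R : ℝ) * indepNum R ≤ (x + 1) * indepNum R := by
        refine mul_le_mul_of_nonneg_right ?_ hαR.le
        calc (chromNum R : ℝ) ≤ ((⌊x⌋₊ + 1 : ℕ):ℝ) := by exact_mod_cast hchrom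
          _ ≤ x + 1 := hKle
    _ = N * Real.log N + indepNum R := by rw [add_mul, hxα, one_mul]
    _ ≤ N * (Real.log N + 1) := by nlinarith

end Cover
section AndPow
variable {V : Type*} [Fintype V] (E : V → V → Prop)

lemma vt_andPow (hvt : VertexTransitive E) (t : ℕ) : VertexTransitive (andPow E t) := by
  intro x y
  choose σ hσ hσxy using fun i => hvt (x i) (y i)
  refine ⟨Equiv.piCongrRight σ, fun a b => ?_, funext fun i => hσxy i⟩
  unfold andPow
  have hne : (Equiv.piCongrRight σ) a ≠ (Equiv.piCongrRight σ) b ↔ a ≠ b :=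
    not_iff_not.2 (Equiv.apply_eq_iff_eq _)
  refine and_congr hne (forall_congr' fun i => or_congr ?_ (hσ i _ _))
  exact ⟨fun h => (σ i).injective h, fun h => congrArg (σ i) h⟩

lemma indep_supermul (s t : ℕ) :
    indepNum (andPow E s) * indepNum (andPow E t) ≤ indepNum (andPow E (s + t)) := by
  classical
  obtain ⟨S, hSi, hSc⟩ := exists_indep_card (andPow E s)
  obtain ⟨T, hTi, hTc⟩ := exists_indep_card (andPow E t)
  set f : (Fin s → V) × (Fin t → V) → (Fin (s + t) → V) := fun p => Fin.append p.1 p.2 with hf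
  have hfinj : Function.Injective f := by
    rintro ⟨x, y⟩ ⟨x', y'⟩ h
    simp only [hf] at h
    have h1 : x = x' := funext fun i => by
      simpa [Fin.append_left] using congrFun h (Fin.castAdd t i)
    have h2 : y = y' := funext fun i => by
      simpa [Fin.append_right] using congrFun h (Fin.natAdd s i)
    simp [h1, h2]
  have hind : Indep (andPow E (s + t)) ((S ×ˢ T).image f) := by
    intro u hu v hv huv hE
    obtain ⟨⟨x, y⟩, hxy, rfl⟩ := Finset.mem_image.1 hu
    obtain ⟨⟨x', y'⟩, hxy', rfl⟩ := Finset.mem_image.1 hv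
    obtain ⟨hxS, hyT⟩ := Finset.mem_product.1 hxy
    obtain ⟨hxS', hyT'⟩ := Finset.mem_product.1 hxy'
    obtain ⟨-, hcoord⟩ := hE
    by_cases hxx : x = x'
    · subst hxx
      have hyy : y ≠ y' := by
        rintro rfl; exact huv rfl
      refine hTi y hyT y' hyT' hyy ⟨hyy, fun i => ?_⟩
      simpa [hf, Fin.append_right] using hcoord (Fin.natAdd s i)
    · refine hSi x hxS x' hxS' hxx ⟨hxx, fun i => ?_⟩
      simpa [hf, Fin.append_left] using hcoord (Fin.castAdd t i)
  calc indepNum (andPow E s) * indepNum (andPow E t)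
      = ((S ×ˢ T).image f).card := by
        rw [Finset.card_image_of_injective _ hfinj, Finset.card_product, hSc, hTc]
    _ ≤ indepNum (andPow E (s + t)) := card_le_indepNum _ hind

lemma indepNum_andPow_le (t : ℕ) : indepNum (andPow E t) ≤ Fintype.card V ^ t := by
  have := indepNum_le_card (andPow E t)
  rwa [Fintype.card_fun, Fintype.card_fin] at this

lemma card_le_chrom_mul_indep_andPow (t : ℕ) :
    Fintype.card V ^ t ≤ chromNum (andPow E t) * indepNum (andPow E t) := by
  have := card_le_chrom_mul_indep (andPow E t) (fun u v h => h.1)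
  rwa [Fintype.card_fun, Fintype.card_fin] at this

end AndPow

/-- if G is vertex-transitive then R_D(G) = log₂|V(G)| − Γ(G). -/

theorem stmt3 {V : Type*} [Fintype V] [Nonempty V]
    (E : V → V → Prop) (hE : ∀ v, ¬ E v v) (hvt : VertexTransitive E) :
    ∃ RD Γ : ℝ,
      Tendsto (fun t : ℕ => Real.logb 2 (chromNum (andPow E t)) / t) atTop (nhds RD) ∧
      Tendsto (fun t : ℕ => Real.logb 2 (indepNum (andPow E t)) / t) atTop (nhds Γ) ∧
      RD = Real.logb 2 (Fintype.card V) - Γ := by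
  classical
  set n := Fintype.card V with hn
  have hnpos : 0 < n := Fintype.card_pos
  have hnR : (0:ℝ) < n := by exact_mod_cast hnpos
  have hnR1 : (1:ℝ) ≤ n := by exact_mod_cast hnpos
  have hlogn : 0 ≤ Real.log n := Real.log_nonneg hnR1
  set a : ℕ → ℕ := fun t => indepNum (andPow E t) with ha
  set cnum : ℕ → ℕ := fun t => chromNum (andPow E t) with hcn
  have ha1 : ∀ t, 1 ≤ a t := fun t => one_le_indepNum _
  have haU : ∀ t, a t ≤ n ^ t := fun t => indepNum_andPow_le E t
  have hc1 : ∀ t, 1 ≤ cnum t := fun t => one_le_chromNum _ (fun u v h => h.1)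
  have hlow : ∀ t, n ^ t ≤ cnum t * a t := fun t => card_le_chrom_mul_indep_andPow E t
  have hapos : ∀ t, (0:ℝ) < a t := fun t => by exact_mod_cast ha1 t
  have hcpos : ∀ t, (0:ℝ) < cnum t := fun t => by exact_mod_cast hc1 t
  have hupp : ∀ t, (cnum t : ℝ) * a t ≤ (n:ℝ)^t * ((t:ℝ) * Real.log n + 1) := by
    intro t
    have h := chrom_mul_indep_le (andPow E t) (fun u v h => h.1) (vt_andPow E hvt t)
    rw [Fintype.card_fun, Fintype.card_fin] at h
    calc (cnum t : ℝ) * a t ≤ (((n : ℕ) ^ t : ℕ):ℝ) * (Real.log (((n:ℕ) ^ t : ℕ)) + 1) := h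
      _ = (n:ℝ)^t * ((t:ℝ) * Real.log n + 1) := by push_cast [Real.log_pow]; ring
  -- the independence limit via Fekete
  set u : ℕ → ℝ := fun t => -Real.log (a t) with hu
  have hsub : Subadditive u := by
    intro m k
    have hmk : (a m : ℝ) * a k ≤ a (m + k) := by exact_mod_cast indep_supermul E m k
    have hlog := Real.log_le_log (mul_pos (hapos m) (hapos k)) hmk
    rw [Real.log_mul (hapos m).ne' (hapos k).ne'] at hlog
    simp only [hu]
    linarith
  have hbdd : BddBelow (Set.range fun t : ℕ => u t / t) := by
    refine ⟨-Real.log n, ?_⟩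
    rintro x ⟨t, rfl⟩
    rcases Nat.eq_zero_or_pos t with rfl | ht
    · have ha0 : a 0 = 1 := le_antisymm (by simpa using haU 0) (ha1 0)
      simp only [hu, ha0, Nat.cast_one, Real.log_one, neg_zero, Nat.cast_zero, div_zero]
      linarith
    · have htR : (0:ℝ) < t := by exact_mod_cast ht
      rw [le_div_iff₀ htR]
      have h1 : (a t : ℝ) ≤ (n:ℝ)^t := by exact_mod_cast haU t
      have h2 : Real.log (a t) ≤ t * Real.log n := by
        calc Real.log (a t) ≤ Real.log ((n:ℝ)^t) := Real.log_le_log (hapos t) h1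
          _ = t * Real.log n := Real.log_pow n t
      simp only [hu]
      linarith
  have hL := hsub.tendsto_lim hbdd
  set Γ : ℝ := -hsub.lim / Real.log 2 with hΓdef
  have hΓ : Tendsto (fun t : ℕ => Real.logb 2 (a t) / t) atTop (nhds Γ) := by
    have h := (hL.neg).div_const (Real.log 2)
    refine h.congr fun t => ?_
    rw [← Real.log_div_log]
    simp only [hu]
    ring
  -- the error term tends to zero
  have herr : Tendsto (fun t : ℕ => Real.logb 2 ((t:ℝ) * Real.log n + 1) / t) atTop (nhds 0) := by
    have h1 : Tendsto (fun x : ℝ => Real.log x / x) atTop (nhds 0) := by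
      have := Real.isLittleO_log_id_atTop.tendsto_div_nhds_zero
      simpa using this
    have h2 : Tendsto (fun t : ℕ => (t:ℝ) + 1) atTop atTop :=
      Filter.tendsto_atTop_add_const_right _ 1 tendsto_natCast_atTop_atTop
    have h3 : Tendsto (fun t : ℕ => Real.log ((t:ℝ)+1) / ((t:ℝ)+1)) atTop (nhds 0) := h1.comp h2
    have h4 : Tendsto (fun t : ℕ => ((t:ℝ)+1) / t) atTop (nhds 1) := by
      have h40 : Tendsto (fun t : ℕ => 1 + 1/(t:ℝ)) atTop (nhds (1+0)) :=
        tendsto_const_nhds.add tendsto_one_div_atTop_nhds_zero_nat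
      rw [add_zero] at h40
      refine h40.congr' ?_
      filter_upwards [eventually_ge_atTop 1] with t ht
      have htR : (0:ℝ) < t := by exact_mod_cast ht
      rw [add_div, div_self htR.ne']
    have h5 : Tendsto (fun t : ℕ => Real.log ((t:ℝ)+1) / t) atTop (nhds 0) := by
      have h50 := h3.mul h4
      rw [zero_mul] at h50
      refine h50.congr fun t => ?_
      have ht1 : ((t:ℝ)+1) ≠ 0 := by positivity
      field_simp
    have h6 : Tendsto (fun t : ℕ => (Real.logb 2 (Real.log n + 1) + Real.logb 2 ((t:ℝ)+1)) / t)
        atTop (nhds 0) := by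
      have hA : Tendsto (fun t : ℕ => Real.logb 2 (Real.log n + 1) / (t:ℝ)) atTop (nhds 0) :=
        tendsto_const_div_atTop_nhds_zero_nat _
      have hB : Tendsto (fun t : ℕ => Real.logb 2 ((t:ℝ)+1) / t) atTop (nhds 0) := by
        have := h5.div_const (Real.log 2)
        rw [zero_div] at this
        refine this.congr fun t => ?_
        rw [← Real.log_div_log]
        ring
      have := hA.add hB
      rw [add_zero] at this
      refine this.congr fun t => ?_
      rw [← add_div]
    refine tendsto_of_tendsto_of_tendsto_of_le_of_le' tendsto_const_nhds h6 ?_ ?_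
    · filter_upwards with t
      have harg : (1:ℝ) ≤ (t:ℝ) * Real.log n + 1 := by
        have : (0:ℝ) ≤ (t:ℝ) * Real.log n := by positivity
        linarith
      have := Real.logb_nonneg (by norm_num : (1:ℝ) < 2) harg
      positivity
    · filter_upwards [eventually_ge_atTop 1] with t ht
      have htR : (0:ℝ) < t := by exact_mod_cast ht
      rw [div_le_div_iff₀ htR htR]
      refine mul_le_mul_of_nonneg_right ?_ htR.le
      have harg1 : (0:ℝ) < (t:ℝ) * Real.log n + 1 := by positivity
      have hln1 : (0:ℝ) < Real.log n + 1 := by linarith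
      have ht1 : (0:ℝ) < (t:ℝ) + 1 := by positivity
      calc Real.logb 2 ((t:ℝ) * Real.log n + 1)
          ≤ Real.logb 2 ((Real.log n + 1) * ((t:ℝ) + 1)) := by
            refine (Real.logb_le_logb (by norm_num) harg1 (by positivity)).2 ?_
            nlinarith
        _ = Real.logb 2 (Real.log n + 1) + Real.logb 2 ((t:ℝ)+1) :=
            Real.logb_mul hln1.ne' ht1.ne'
  -- assemble
  refine ⟨Real.logb 2 n - Γ, Γ, ?_, hΓ, rfl⟩
  have hlowb : Tendsto (fun t : ℕ => Real.logb 2 n - Real.logb 2 (a t) / t) atTop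
      (nhds (Real.logb 2 n - Γ)) := tendsto_const_nhds.sub hΓ
  have hupb : Tendsto (fun t : ℕ =>
      (Real.logb 2 n - Real.logb 2 (a t) / t) + Real.logb 2 ((t:ℝ) * Real.log n + 1) / t) atTop
      (nhds (Real.logb 2 n - Γ)) := by
    have := hlowb.add herr
    rwa [add_zero] at this
  refine tendsto_of_tendsto_of_tendsto_of_le_of_le' hlowb hupb ?_ ?_
  · filter_upwards [eventually_ge_atTop 1] with t ht
    have htR : (0:ℝ) < t := by exact_mod_cast ht
    have claim1 : (t:ℝ) * Real.logb 2 n ≤ Real.logb 2 (cnum t) + Real.logb 2 (a t) := by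
      have h0 : ((n:ℝ))^t ≤ (cnum t : ℝ) * a t := by exact_mod_cast hlow t
      have h2 : Real.logb 2 ((n:ℝ)^t) ≤ Real.logb 2 ((cnum t:ℝ) * a t) :=
        (Real.logb_le_logb (by norm_num) (pow_pos hnR t) (mul_pos (hcpos t) (hapos t))).2 h0
      rwa [Real.logb_pow, Real.logb_mul (hcpos t).ne' (hapos t).ne'] at h2
    rw [sub_le_iff_le_add, ← add_div, le_div_iff₀ htR]
    linarith
  · filter_upwards [eventually_ge_atTop 1] with t ht
    have htR : (0:ℝ) < t := by exact_mod_cast ht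
    have harg1 : (0:ℝ) < (t:ℝ) * Real.log n + 1 := by positivity
    have claim2 : Real.logb 2 (cnum t) + Real.logb 2 (a t)
        ≤ (t:ℝ) * Real.logb 2 n + Real.logb 2 ((t:ℝ) * Real.log n + 1) := by
      have h0 := hupp t
      have h2 : Real.logb 2 ((cnum t:ℝ) * a t)
          ≤ Real.logb 2 ((n:ℝ)^t * ((t:ℝ) * Real.log n + 1)) :=
        (Real.logb_le_logb (by norm_num) (mul_pos (hcpos t) (hapos t))
          (mul_pos (pow_pos hnR t) harg1)).2 h0
      rwa [Real.logb_mul (hcpos t).ne' (hapos t).ne',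
        Real.logb_mul (pow_pos hnR t).ne' harg1.ne', Real.logb_pow] at h2
    have hrhs : (Real.logb 2 n - Real.logb 2 (a t) / t) + Real.logb 2 ((t:ℝ) * Real.log n + 1) / t
        = ((t:ℝ) * Real.logb 2 n - Real.logb 2 (a t) + Real.logb 2 ((t:ℝ) * Real.log n + 1)) / t := by
      field_simp
    rw [hrhs, div_le_div_iff₀ htR htR]
    refine mul_le_mul_of_nonneg_right ?_ htR.le
    linarith
end

section
/- For every integer k ≥ 3, the Dilworth rate of the cyclically oriented k-cycle satisfies R_D(C⃗_k) = log₂(k/(k−1)); equivalently, χ(C⃗_k^{∧t})^{1/t} → k/(k−1) as t → ∞. -/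
open Filter

section Stmt4Aux
open Finset

noncomputable def om (k : ℕ) : ℂ := Complex.exp (2 * Real.pi * Complex.I / k)

lemma om_prim {k : ℕ} (hk : 3 ≤ k) : IsPrimitiveRoot (om k) k :=
  Complex.isPrimitiveRoot_exp k (by omega)

lemma om_pow_k {k : ℕ} (hk : 3 ≤ k) : om k ^ k = 1 := (om_prim hk).pow_eq_one

lemma om_ne_zero {k : ℕ} : om k ≠ 0 := Complex.exp_ne_zero _

lemma om_pow_mod {k : ℕ} (hk : 3 ≤ k) (m : ℕ) : om k ^ (m % k) = om k ^ m := by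
  conv_rhs => rw [← Nat.div_add_mod m k]
  rw [pow_add, pow_mul, om_pow_k hk, one_pow, one_mul]

lemma om_pow_val_add {k : ℕ} [NeZero k] (hk : 3 ≤ k) (a b : ZMod k) :
    om k ^ (a + b).val = om k ^ a.val * om k ^ b.val := by
  rw [ZMod.val_add, om_pow_mod hk, pow_add]

lemma om_sum {k : ℕ} (hk : 3 ≤ k) (d : ℕ) :
    ∑ e ∈ Finset.range k, om k ^ (e * d) = if k ∣ d then (k : ℂ) else 0 := by
  have hpow : ∀ e : ℕ, om k ^ (e * d) = (om k ^ d) ^ e := fun e => by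
    rw [← pow_mul, mul_comm]
  simp only [hpow]
  by_cases hd : k ∣ d
  · have h1 : om k ^ d = 1 := ((om_prim hk).pow_eq_one_iff_dvd d).2 hd
    simp [h1, hd]
  · have h1 : om k ^ d ≠ 1 := fun h => hd (((om_prim hk).pow_eq_one_iff_dvd d).1 h)
    rw [geom_sum_eq h1]
    have : (om k ^ d) ^ k = 1 := by rw [← pow_mul, mul_comm, pow_mul, om_pow_k hk, one_pow]
    simp [this, hd]


noncomputable def hfun (k : ℕ) : ZMod k → ℂ :=
  fun c => if c = 0 then om k else if c = 1 then -1 else 0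

lemma hfun_eq {k : ℕ} (hk : 3 ≤ k) [NeZero k] (c : ZMod k) :
    hfun k c = ∑ e ∈ range (k-1), ((om k - om k ^ ((k-1)*e)) / k) * om k ^ (e * c.val) := by
  haveI : Fact (1 < k) := ⟨by omega⟩
  have hkC : (k : ℂ) ≠ 0 := Nat.cast_ne_zero.2 (by omega)
  have hT : ∀ d : ℕ, ∑ e ∈ range (k-1), om k ^ (e * d)
      = (if k ∣ d then (k:ℂ) else 0) - om k ^ ((k-1)*d) := by
    intro d
    have h1 : k - 1 + 1 = k := by omega
    have h2 : (∑ e ∈ range (k-1), om k ^ (e*d)) + om k ^ ((k-1)*d)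
        = if k ∣ d then (k:ℂ) else 0 := by
      rw [← Finset.sum_range_succ (fun e => om k ^ (e*d)) (k-1), h1]
      exact om_sum hk d
    linear_combination h2
  have term : ∀ e : ℕ, ((om k - om k ^ ((k-1)*e)) / k) * om k ^ (e * c.val)
      = (om k * om k ^ (e * c.val)) / k - om k ^ (e * ((k-1) + c.val)) / k := by
    intro e
    have h2 : e * ((k-1) + c.val) = (k-1)*e + e * c.val := by ring
    rw [h2, pow_add]
    field_simp
  rw [Finset.sum_congr rfl (fun e _ => term e), Finset.sum_sub_distrib,
    ← Finset.sum_div, ← Finset.sum_div, ← Finset.mul_sum, hT, hT]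
  have cancel : om k ^ ((k-1)*((k-1) + c.val)) = om k * om k ^ ((k-1)*c.val) := by
    obtain ⟨j, hj⟩ : ∃ j, k = j + 3 := ⟨k - 3, by omega⟩
    subst hj
    have h3 : (j+3-1)*((j+3-1) + c.val) = (j+3)*(j+1) + (1 + (j+3-1)*c.val) := by
      simp only [show j+3-1 = j+2 from rfl]; ring
    rw [h3, pow_add, pow_mul, om_pow_k hk, one_pow, one_mul, pow_add, pow_one]
  rw [cancel]
  have hdvd2 : ∀ m : ℕ, 0 < m → m < 2*k → k ∣ m → m = k := by
    intro m h1 h2 ⟨q, hq⟩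
    rcases Nat.lt_or_ge q 2 with h | h
    · interval_cases q <;> omega
    · have := Nat.mul_le_mul_left k h; omega
  have hvlt : c.val < k := ZMod.val_lt c
  by_cases hc0 : c = 0
  · have hv : c.val = 0 := by simp [hc0]
    rw [hv]
    have hd1 : k ∣ 0 := dvd_zero k
    have hd2 : ¬ k ∣ (k-1) + 0 := by
      intro hd; have := Nat.eq_zero_of_dvd_of_lt hd (by omega); omega
    rw [if_pos hd1, if_neg hd2]
    simp only [hfun, hc0, if_true]
    field_simp
    ring
  · by_cases hc1 : c = 1
    · have hv : c.val = 1 := by rw [hc1]; exact ZMod.val_one k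
      rw [hv]
      have hd1 : ¬ k ∣ 1 := by
        intro hd; have := Nat.le_of_dvd one_pos hd; omega
      have hd2 : k ∣ (k-1) + 1 := ⟨1, by omega⟩
      rw [if_neg hd1, if_pos hd2]
      have h10 : (1 : ZMod k) ≠ 0 := one_ne_zero
      simp only [hfun, hc0, if_false, hc1, if_true, h10]
      field_simp
      ring
    · have hv0 : c.val ≠ 0 := fun h => hc0 ((ZMod.val_eq_zero c).1 h)
      have hv1 : c.val ≠ 1 := by
        intro h
        apply hc1
        rw [← ZMod.natCast_zmod_val c, h, Nat.cast_one]
      have hd1 : ¬ k ∣ c.val := by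
        intro hd; exact hv0 (Nat.eq_zero_of_dvd_of_lt hd hvlt)
      have hd2 : ¬ k ∣ (k-1) + c.val := by
        intro hd; have := hdvd2 _ (by omega) (by omega) hd; omega
      rw [if_neg hd1, if_neg hd2]
      simp only [hfun, hc0, if_false, hc1]
      field_simp
      ring


lemma fiber_bound {k : ℕ} (hk : 3 ≤ k) [NeZero k] {t : ℕ} (S : Finset (Fin t → ZMod k))
    (hS : ∀ x ∈ S, ∀ y ∈ S, x ≠ y → ¬ andPow (fun i j : ZMod k => j = i + 1) t x y) :
    S.card ≤ (k-1)^t := by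
  classical
  set f : (Fin t → ZMod k) → ((Fin t → ZMod k) → ℂ) :=
    fun x z => ∏ i, hfun k (z i - x i) with hf
  -- basis functions
  set B : (Fin t → Fin (k-1)) → ((Fin t → ZMod k) → ℂ) :=
    fun E z => ∏ i, (om k ^ (z i).val) ^ (E i : ℕ) with hB
  set W : Submodule ℂ ((Fin t → ZMod k) → ℂ) := Submodule.span ℂ (Set.range B) with hW
  -- (a) vanishing
  have hvan : ∀ x ∈ S, ∀ y ∈ S, x ≠ y → f x y = 0 := by
    intro x hx y hy hxy
    have hne := hS x hx y hy hxy
    simp only [andPow, not_and, not_forall] at hne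
    obtain ⟨i, hi⟩ := hne hxy
    push_neg at hi
    apply Finset.prod_eq_zero (Finset.mem_univ i)
    have h0 : y i - x i ≠ 0 := sub_ne_zero_of_ne (Ne.symm hi.1)
    have h1 : y i - x i ≠ 1 := by
      intro h; rw [sub_eq_iff_eq_add] at h; exact hi.2 (by rw [h, add_comm])
    simp [hfun, h0, h1]
  -- (b) nonvanishing on diagonal
  have hdiag : ∀ x, f x x = om k ^ t := by
    intro x; simp [hf, hfun]
  -- (c) membership in W
  have hmem : ∀ x, f x ∈ W := by
    intro x
    have expand : f x = ∑ E : Fin t → Fin (k-1),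
        (∏ i, (((om k - om k ^ ((k-1)*(E i : ℕ))) / k) * (om k ^ ((- x) i).val) ^ (E i : ℕ)))
          • B E := by
      funext z
      rw [Finset.sum_apply]
      simp only [Pi.smul_apply, smul_eq_mul]
      have hsub : ∀ i, z i - x i = z i + (-x) i := fun i => by simp [sub_eq_add_neg]
      calc f x z = ∏ i, ∑ e ∈ range (k-1),
            ((om k - om k ^ ((k-1)*e)) / k) * om k ^ (e * (z i - x i).val) := by
            exact Finset.prod_congr rfl (fun i _ => hfun_eq hk _)
        _ = ∏ i, ∑ e : Fin (k-1),
            ((om k - om k ^ ((k-1)*(e:ℕ))) / k) * om k ^ ((e:ℕ) * (z i - x i).val) := by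
            refine Finset.prod_congr rfl (fun i _ => ?_)
            exact (Fin.sum_univ_eq_sum_range _ _).symm
        _ = ∑ E ∈ Fintype.piFinset (fun _ : Fin t => (univ : Finset (Fin (k-1)))),
            ∏ i, (((om k - om k ^ ((k-1)*(E i : ℕ))) / k) * om k ^ ((E i : ℕ) * (z i - x i).val)) := by
            exact Finset.prod_univ_sum _ _
        _ = ∑ E : Fin t → Fin (k-1),
            (∏ i, (((om k - om k ^ ((k-1)*(E i : ℕ))) / k) * (om k ^ ((- x) i).val) ^ (E i : ℕ)))
              * B E z := by
            rw [Fintype.piFinset_univ]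
            refine Finset.sum_congr rfl (fun E _ => ?_)
            rw [hB, ← Finset.prod_mul_distrib]
            refine Finset.prod_congr rfl (fun i _ => ?_)
            have : om k ^ ((E i : ℕ) * (z i - x i).val) = (om k ^ ((z i - x i).val)) ^ (E i : ℕ) := by
              rw [← pow_mul, mul_comm]
            rw [this, hsub i, om_pow_val_add hk, mul_pow]
            ring
    rw [expand]
    exact Submodule.sum_mem _ (fun E _ =>
      Submodule.smul_mem _ _ (Submodule.subset_span ⟨E, rfl⟩))
  -- linear independence
  haveI : FiniteDimensional ℂ W := FiniteDimensional.span_of_finite ℂ (Set.finite_range B)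
  have hli : LinearIndependent ℂ (fun x : ↥S => f ↑x) := by
    rw [Fintype.linearIndependent_iff]
    intro g hg y
    have := congrFun hg (↑y)
    rw [Finset.sum_apply] at this
    simp only [Pi.smul_apply, smul_eq_mul, Pi.zero_apply] at this
    rw [Finset.sum_eq_single y (fun x _ hx => by
      rw [hvan ↑x x.2 ↑y y.2 (fun h => hx (Subtype.ext h)), mul_zero])
      (fun h => absurd (Finset.mem_univ y) h)] at this
    rcases mul_eq_zero.1 this with h | h
    · exact h
    · exact absurd (hdiag ↑y ▸ h) (pow_ne_zero t om_ne_zero)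
  have hli2 : LinearIndependent ℂ (fun x : ↥S => (⟨f ↑x, hmem ↑x⟩ : W)) := by
    apply LinearIndependent.of_comp W.subtype
    exact hli
  calc S.card = Fintype.card ↥S := (Fintype.card_coe S).symm
    _ ≤ Module.finrank ℂ W := hli2.fintype_card_le_finrank
    _ ≤ Fintype.card (Fin t → Fin (k-1)) := by
        rw [hW]
        exact finrank_range_le_card B
    _ = (k-1)^t := by simp


lemma chrom_nonempty {V : Type*} [Fintype V] (E : V → V → Prop)
    (hE : ∀ u v, E u v → u ≠ v) :
    {n : ℕ | ∃ c : V → Fin n, ∀ u v : V, E u v → c u ≠ c v}.Nonempty := by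
  classical
  exact ⟨Fintype.card V, Fintype.equivFin V, fun u v h hc =>
    hE u v h ((Fintype.equivFin V).injective hc)⟩

lemma chrom_spec {V : Type*} [Fintype V] (E : V → V → Prop)
    (hE : ∀ u v, E u v → u ≠ v) :
    ∃ c : V → Fin (chromNum E), ∀ u v : V, E u v → c u ≠ c v :=
  Nat.sInf_mem (chrom_nonempty E hE)

lemma chrom_le {V : Type*} {E : V → V → Prop} {n : ℕ}
    (h : ∃ c : V → Fin n, ∀ u v : V, E u v → c u ≠ c v) : chromNum E ≤ n :=
  Nat.sInf_le h

lemma chrom_lower {k : ℕ} (hk : 3 ≤ k) [NeZero k] (t n : ℕ)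
    (c : (Fin t → ZMod k) → Fin n)
    (hc : ∀ u v, andPow (fun i j : ZMod k => j = i + 1) t u v → c u ≠ c v) :
    k ^ t ≤ n * (k-1)^t := by
  classical
  have hcard : (univ : Finset (Fin t → ZMod k)).card = k ^ t := by
    simp [ZMod.card]
  have hfib := Finset.card_eq_sum_card_fiberwise
    (f := c) (s := (univ : Finset (Fin t → ZMod k))) (t := univ) (fun x _ => mem_univ _)
  rw [hcard] at hfib
  rw [hfib]
  calc ∑ b ∈ univ, ((univ : Finset (Fin t → ZMod k)).filter fun a => c a = b).card
      ≤ ∑ _b ∈ (univ : Finset (Fin n)), (k-1)^t := by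
        refine Finset.sum_le_sum (fun b _ => ?_)
        refine fiber_bound hk _ (fun x hx y hy hxy hE => ?_)
        simp only [mem_filter] at hx hy
        exact hc x y hE (hx.2.trans hy.2.symm)
    _ = n * (k-1)^t := by simp [mul_comm]


lemma two_term (a b q : ℕ) : a^(q+1) + (q+1)*b*a^q ≤ (a+b)^(q+1) := by
  induction q with
  | zero => simp [pow_succ]
  | succ q ih =>
    have h2 : (a+b)^(q+1+1) = (a+b) * (a+b)^(q+1) := by ring
    have h3 : (a+b) * (a^(q+1) + (q+1)*b*a^q) ≤ (a+b) * (a+b)^(q+1) :=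
      Nat.mul_le_mul_left _ ih
    refine le_trans (Nat.le.intro (k := (q+1)*(b*b)*a^q) (by ring)) (h2 ▸ h3)

lemma half_pow {n s : ℕ} (hs : 0 < s) (hsn : s ≤ n) :
    2*(n-s)^(n/s+1) ≤ n^(n/s+1) := by
  have h1 := two_term (n-s) s (n/s)
  rw [Nat.sub_add_cancel hsn] at h1
  have h2 : n - s ≤ (n/s+1)*s := by
    have hdm := Nat.div_add_mod n s
    have hmod : n % s < s := Nat.mod_lt n hs
    have h3 : (n/s+1)*s = n/s*s + s := by ring
    calc n - s ≤ n := Nat.sub_le n s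
      _ = s*(n/s) + n%s := hdm.symm
      _ ≤ s*(n/s) + s := Nat.add_le_add_left (le_of_lt hmod) _
      _ = (n/s+1)*s := by ring
  calc 2*(n-s)^(n/s+1) = (n-s)^(n/s+1) + (n-s)*(n-s)^(n/s) := by ring
    _ ≤ (n-s)^(n/s+1) + (n/s+1)*s*(n-s)^(n/s) :=
        Nat.add_le_add_left (Nat.mul_le_mul_right _ h2) _
    _ ≤ n^(n/s+1) := h1


noncomputable def Tset (k : ℕ) [NeZero k] : Finset (ZMod k) :=
  Finset.univ.filter (fun c => c.val ≤ k - 2)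

noncomputable def indepSet (k t r : ℕ) [NeZero k] : Finset (Fin t → ZMod k) :=
  (Fintype.piFinset (fun _ : Fin t => Tset k)).filter
    (fun x => (∑ i, (x i).val) % (t+1) = r)

lemma Tset_card {k : ℕ} (hk : 3 ≤ k) [NeZero k] : (Tset k).card = k - 1 := by
  have hlt : k - 1 < k := by omega
  have hval : (((k-1 : ℕ) : ZMod k)).val = k - 1 := ZMod.val_cast_of_lt hlt
  have hTe : Tset k = Finset.univ.erase ((k-1 : ℕ) : ZMod k) := by
    ext c
    simp only [Tset, mem_filter, mem_univ, true_and, mem_erase, and_true]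
    constructor
    · intro h he
      rw [he, hval] at h; omega
    · intro h
      have hv : c.val < k := ZMod.val_lt c
      rcases Nat.lt_or_ge c.val (k-1) with h2 | h2
      · omega
      · exfalso
        apply h
        have h3 : c.val = k - 1 := by omega
        rw [← ZMod.natCast_zmod_val c, h3]
  rw [hTe, Finset.card_erase_of_mem (mem_univ _), Finset.card_univ, ZMod.card]

lemma indepSet_indep {k : ℕ} (hk : 3 ≤ k) [NeZero k] (t r : ℕ) :
    ∀ x ∈ indepSet k t r, ∀ y ∈ indepSet k t r,
      ¬ andPow (fun i j : ZMod k => j = i + 1) t x y := by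
  haveI : Fact (1 < k) := ⟨by omega⟩
  intro x hx y hy hE
  obtain ⟨hxy, hstep⟩ := hE
  simp only [indepSet, mem_filter, Fintype.mem_piFinset, Tset, mem_univ, true_and] at hx hy
  have hxA : ∀ i, (x i).val ≤ k - 2 := hx.1
  have hval : ∀ i, (y i).val = (x i).val + (if x i = y i then 0 else 1) := by
    intro i
    rcases hstep i with h | h
    · simp [h]
    · have hne : x i ≠ y i := by
        intro he
        rw [← he, left_eq_add] at h
        exact one_ne_zero h
      simp only [hne, if_false]
      rw [h, ZMod.val_add, ZMod.val_one]
      have h2 := hxA i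
      exact Nat.mod_eq_of_lt (by omega)
  have hsum : ∑ i, (y i).val = ∑ i, (x i).val + ∑ i, (if x i = y i then (0:ℕ) else 1) := by
    rw [← Finset.sum_add_distrib]
    exact Finset.sum_congr rfl (fun i _ => hval i)
  have hD1 : 1 ≤ ∑ i : Fin t, (if x i = y i then (0:ℕ) else 1) := by
    obtain ⟨i, hi⟩ := Function.ne_iff.1 hxy
    calc (1:ℕ) = (if x i = y i then 0 else 1) := by simp [hi]
      _ ≤ _ := Finset.single_le_sum (f := fun j => if x j = y j then (0:ℕ) else 1)
          (fun j _ => Nat.zero_le _) (mem_univ i)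
  have hDt : (∑ i : Fin t, (if x i = y i then (0:ℕ) else 1)) ≤ t := by
    calc (∑ i : Fin t, (if x i = y i then (0:ℕ) else 1)) ≤ ∑ _i : Fin t, 1 :=
        Finset.sum_le_sum (fun i _ => by by_cases h : x i = y i <;> simp [h])
      _ = t := by simp
  have hmx : (∑ i, (x i).val) % (t+1) = r := hx.2
  have hmy : (∑ i, (y i).val) % (t+1) = r := hy.2
  have hmod : (∑ i, (x i).val + ∑ i : Fin t, (if x i = y i then (0:ℕ) else 1)) % (t+1)
      = (∑ i, (x i).val) % (t+1) := by
    rw [← hsum, hmy, hmx]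
  have hdvd : (t+1) ∣ ∑ i : Fin t, (if x i = y i then (0:ℕ) else 1) := by
    have h5 : (∑ i, (x i).val + ∑ i : Fin t, (if x i = y i then (0:ℕ) else 1)) % (t+1)
        = (∑ i, (x i).val + 0) % (t+1) := by
      rw [Nat.add_zero]; exact hmod
    have h6 : (∑ i : Fin t, (if x i = y i then (0:ℕ) else 1)) ≡ 0 [MOD t+1] :=
      Nat.ModEq.add_left_cancel' _ h5
    exact (Nat.modEq_zero_iff_dvd).1 h6
  have := Nat.le_of_dvd (by omega) hdvd
  omega

lemma exists_indep {k : ℕ} (hk : 3 ≤ k) [NeZero k] (t : ℕ) :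
    ∃ r, (k-1)^t ≤ (t+1) * (indepSet k t r).card := by
  classical
  have hAcard : (Fintype.piFinset (fun _ : Fin t => Tset k)).card = (k-1)^t := by
    rw [Fintype.card_piFinset]
    simp [Tset_card hk]
  have hmap : ∀ x ∈ (Fintype.piFinset (fun _ : Fin t => Tset k)),
      (∑ i, (x i).val) % (t+1) ∈ Finset.range (t+1) :=
    fun x _ => mem_range.2 (Nat.mod_lt _ t.succ_pos)
  have hsplit := Finset.card_eq_sum_card_fiberwise hmap
  have hex : ∃ r ∈ Finset.range (t+1), (k-1)^t ≤ (t+1) * (indepSet k t r).card := by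
    refine Finset.exists_le_of_sum_le (f := fun _ => (k-1)^t)
      (g := fun r => (t+1) * (indepSet k t r).card)
      ⟨0, mem_range.2 t.succ_pos⟩ ?_
    rw [Finset.sum_const, card_range, ← Finset.mul_sum, smul_eq_mul]
    simp only [indepSet]
    rw [← hsplit, hAcard]
  obtain ⟨r, _, hr⟩ := hex
  exact ⟨r, hr⟩


lemma covering {k t m : ℕ} (hk : 3 ≤ k) [NeZero k] (S : Finset (Fin t → ZMod k))
    (hm : (k^t) * ((k^t - S.card)^m) < (k^t)^m) :
    ∃ v : Fin m → (Fin t → ZMod k), ∀ x, ∃ j, x ∈ S.image (· + v j) := by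
  classical
  by_contra hcon
  push_neg at hcon
  have hV : Fintype.card (Fin t → ZMod k) = k^t := by simp [ZMod.card]
  have key : ∀ x : Fin t → ZMod k,
      (univ.filter (fun u : Fin t → ZMod k => x ∉ S.image (· + u))).card = k^t - S.card := by
    intro x
    have h1 : univ.filter (fun u : Fin t → ZMod k => x ∈ S.image (· + u))
        = S.image (fun a => x - a) := by
      ext u
      simp only [mem_filter, mem_univ, true_and, mem_image]
      constructor
      · rintro ⟨a, ha, hau⟩; exact ⟨a, ha, by rw [← hau]; ring⟩
      · rintro ⟨a, ha, hau⟩; exact ⟨a, ha, by rw [← hau]; ring⟩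
    have h2 : (S.image (fun a => x - a)).card = S.card :=
      Finset.card_image_of_injective _ sub_right_injective
    have h3 := Finset.card_filter_add_card_filter_not
      (s := (univ : Finset (Fin t → ZMod k))) (p := fun u => x ∈ S.image (· + u))
    rw [Finset.card_univ, hV, h1, h2] at h3
    have h4 : (univ.filter (fun u : Fin t → ZMod k => ¬ x ∈ S.image (· + u))).card
        = k^t - S.card := by omega
    convert h4 using 2
  have cnt : ∀ x : Fin t → ZMod k,
      (univ.filter (fun v : Fin m → (Fin t → ZMod k) => ∀ j, x ∉ S.image (· + v j))).card
        = (k^t - S.card)^m := by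
    intro x
    have hpi : univ.filter (fun v : Fin m → (Fin t → ZMod k) => ∀ j, x ∉ S.image (· + v j))
        = Fintype.piFinset (fun _ : Fin m =>
            univ.filter (fun u : Fin t → ZMod k => x ∉ S.image (· + u))) := by
      ext v
      simp [Fintype.mem_piFinset]
    rw [hpi, Fintype.card_piFinset]
    rw [Finset.prod_const, key x, Finset.card_univ, Fintype.card_fin]
  have hsum : ∑ v : Fin m → (Fin t → ZMod k),
      (univ.filter (fun x : Fin t → ZMod k => ∀ j, x ∉ S.image (· + v j))).card
      = k^t * (k^t - S.card)^m := by
    calc ∑ v : Fin m → (Fin t → ZMod k),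
        (univ.filter (fun x : Fin t → ZMod k => ∀ j, x ∉ S.image (· + v j))).card
        = ∑ v : Fin m → (Fin t → ZMod k), ∑ x : Fin t → ZMod k,
            (if ∀ j, x ∉ S.image (· + v j) then 1 else 0) := by
          exact Finset.sum_congr rfl (fun v _ => Finset.card_filter _ _)
      _ = ∑ x : Fin t → ZMod k, ∑ v : Fin m → (Fin t → ZMod k),
            (if ∀ j, x ∉ S.image (· + v j) then 1 else 0) := Finset.sum_comm
      _ = ∑ x : Fin t → ZMod k, (k^t - S.card)^m := by
          refine Finset.sum_congr rfl (fun x _ => ?_)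
          rw [← Finset.card_filter]
          exact cnt x
      _ = k^t * (k^t - S.card)^m := by
          rw [Finset.sum_const, Finset.card_univ, hV, smul_eq_mul]
  have hge : (k^t)^m ≤ k^t * (k^t - S.card)^m := by
    rw [← hsum]
    calc (k^t)^m = ∑ _v : Fin m → (Fin t → ZMod k), 1 := by
          rw [Finset.sum_const, Finset.card_univ, smul_eq_mul, mul_one]
          rw [Fintype.card_pi]
          simp [hV]
      _ ≤ _ := by
          refine Finset.sum_le_sum (fun v _ => ?_)
          obtain ⟨x, hx⟩ := hcon v
          refine Finset.card_pos.2 ⟨x, ?_⟩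
          simp only [mem_filter, mem_univ, true_and]
          exact hx
  exact Nat.lt_irrefl _ (lt_of_le_of_lt hge hm)


lemma chrom_upper {k t m : ℕ} [NeZero k] (S : Finset (Fin t → ZMod k))
    (hind : ∀ x ∈ S, ∀ y ∈ S, ¬ andPow (fun i j : ZMod k => j = i + 1) t x y)
    (hcov : ∃ v : Fin m → (Fin t → ZMod k), ∀ x, ∃ j, x ∈ S.image (· + v j)) :
    chromNum (andPow (fun i j : ZMod k => j = i + 1) t) ≤ m := by
  obtain ⟨v, hv⟩ := hcov
  choose jof hj using hv
  apply Nat.sInf_le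
  refine ⟨jof, ?_⟩
  intro a b hE hab
  have ha := hj a
  have hb := hj b
  rw [hab] at ha
  obtain ⟨p, hp, hpa⟩ := Finset.mem_image.1 ha
  obtain ⟨q, hq, hqb⟩ := Finset.mem_image.1 hb
  refine hind p hp q hq ?_
  obtain ⟨hne, hstep⟩ := hE
  constructor
  · intro hpq
    rw [hpq] at hpa
    exact hne (hpa.symm.trans hqb)
  · intro i
    have hpa' : p i + v (jof b) i = a i := congrFun hpa i
    have hqb' : q i + v (jof b) i = b i := congrFun hqb i
    rcases hstep i with h | h
    · left
      have : p i + v (jof b) i = q i + v (jof b) i := by rw [hpa', hqb', h]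
      exact add_right_cancel this
    · right
      have : q i + v (jof b) i = (p i + 1) + v (jof b) i := by
        rw [hqb', h, ← hpa']; ring
      exact add_right_cancel this


lemma main_bounds {k : ℕ} (hk : 3 ≤ k) [NeZero k] (t : ℕ) :
    k^t ≤ chromNum (andPow (fun i j : ZMod k => j = i + 1) t) * (k-1)^t ∧
    ∃ s : ℕ, 0 < s ∧ (k-1)^t ≤ (t+1)*s ∧
      chromNum (andPow (fun i j : ZMod k => j = i + 1) t) ≤ (k^t/s + 1) * (t*k+1) := by
  constructor
  · obtain ⟨c, hc⟩ := Nat.sInf_mem (chrom_nonempty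
      (andPow (fun i j : ZMod k => j = i + 1) t) (fun u v h => h.1))
    exact chrom_lower hk t _ c hc
  · obtain ⟨r, hr⟩ := exists_indep hk t
    set s := (indepSet k t r).card with hs
    have hspos : 0 < s := by
      have h1 : 0 < (k-1)^t := Nat.pow_pos (by omega)
      by_contra h
      push_neg at h
      interval_cases s <;> omega
    refine ⟨s, hspos, hr, ?_⟩
    set n := k^t with hn
    have hsn : s ≤ n := by
      calc s ≤ Fintype.card (Fin t → ZMod k) := Finset.card_le_univ _
        _ = n := by simp [ZMod.card, hn]
    set Q := n/s + 1 with hQ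
    set L := t*k + 1 with hL
    have hhalf := half_pow hspos hsn
    have hm : n * ((n - s)^(Q*L)) < n^(Q*L) := by
      have hnpos : 0 < n := by positivity
      by_cases h0 : n - s = 0
      · have : (n-s)^(Q*L) = 0 := by
          rw [h0]; exact zero_pow (by positivity)
        rw [this, Nat.mul_zero]
        positivity
      · have hpos : 0 < (n - s)^(Q*L) := Nat.pow_pos (by omega)
        have hn2L : n < 2^L := by
          calc n = k^t := hn
            _ ≤ (2^k)^t := Nat.pow_le_pow_left (le_of_lt (Nat.lt_two_pow_self (n := k))) t
            _ = 2^(k*t) := by rw [← pow_mul]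
            _ < 2^(k*t+1) := Nat.pow_lt_pow_right (by omega) (by omega)
            _ = 2^L := by rw [hL]; ring_nf
        calc n * (n-s)^(Q*L) < 2^L * (n-s)^(Q*L) :=
              (Nat.mul_lt_mul_right hpos).2 hn2L
          _ = (2*(n-s)^Q)^L := by rw [mul_pow, ← pow_mul]
          _ ≤ (n^Q)^L := Nat.pow_le_pow_left hhalf L
          _ = n^(Q*L) := by rw [← pow_mul]
    exact chrom_upper _ (indepSet_indep hk t r) (covering hk _ hm)


end Stmt4Aux

/-- the Dilworth rate of the cyclically oriented k-cycle is
log₂(k/(k−1)), i.e. χ(C⃗_k^{∧t})^{1/t} → k/(k−1). -/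
theorem stmt4 (k : ℕ) (hk : 3 ≤ k) :
    Tendsto (fun t : ℕ =>
        (chromNum (andPow (fun i j : ZMod k => j = i + 1) t) : ℝ) ^ (1 / (t : ℝ)))
      atTop (nhds ((k : ℝ) / ((k : ℝ) - 1))) := by
  haveI : NeZero k := ⟨by omega⟩
  set χ : ℕ → ℕ := fun t => chromNum (andPow (fun i j : ZMod k => j = i + 1) t) with hχdef
  set r : ℝ := (k:ℝ)/((k:ℝ)-1) with hrdef
  have hk2 : (2:ℝ) ≤ (k:ℝ) := by exact_mod_cast (by omega : 2 ≤ k)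
  have hk1pos : (0:ℝ) < (k:ℝ) - 1 := by linarith
  have hkpos : (0:ℝ) < (k:ℝ) := by linarith
  have hrpos : 0 < r := div_pos hkpos hk1pos
  have hr1 : 1 ≤ r := by rw [hrdef, le_div_iff₀ hk1pos]; linarith
  have hcast : ((k-1 : ℕ):ℝ) = (k:ℝ) - 1 := by
    rw [Nat.cast_sub (by omega)]; simp
  -- lower bound
  have hlow : ∀ t : ℕ, r^t ≤ (χ t : ℝ) := by
    intro t
    obtain ⟨h1, _⟩ := main_bounds hk t
    have h2 : ((k:ℝ))^t ≤ (χ t : ℝ) * ((k:ℝ)-1)^t := by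
      rw [← hcast]
      exact_mod_cast h1
    rw [hrdef, div_pow, div_le_iff₀ (by positivity)]
    exact h2
  -- upper bound
  have hupp : ∀ t : ℕ, (χ t : ℝ) ≤ ((k:ℝ)*((t:ℝ)+2))^2 * r^t := by
    intro t
    obtain ⟨_, s, hspos, hsl, hub⟩ := main_bounds hk t
    have hsR : (0:ℝ) < (s:ℝ) := by exact_mod_cast hspos
    have hrt0 : (0:ℝ) ≤ r^t := le_of_lt (pow_pos hrpos t)
    have hrt1 : (1:ℝ) ≤ r^t := one_le_pow₀ hr1
    have h4 : r^t * ((k:ℝ)-1)^t = (k:ℝ)^t := by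
      rw [hrdef, div_pow]; field_simp
    have hql : ((k^t / s : ℕ) : ℝ) ≤ ((t:ℝ)+1) * r^t := by
      calc ((k^t / s : ℕ) : ℝ) ≤ ((k^t : ℕ):ℝ) / (s:ℝ) := Nat.cast_div_le
        _ ≤ ((t:ℝ)+1) * r^t := by
            rw [div_le_iff₀ hsR]
            have h3 : ((k:ℝ)-1)^t ≤ ((t:ℝ)+1) * s := by
              rw [← hcast]; exact_mod_cast hsl
            calc ((k^t : ℕ):ℝ) = (k:ℝ)^t := by push_cast; ring
              _ = r^t * ((k:ℝ)-1)^t := h4.symm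
              _ ≤ r^t * (((t:ℝ)+1) * s) := by
                  exact mul_le_mul_of_nonneg_left h3 hrt0
              _ = ((t:ℝ)+1) * r^t * s := by ring
    have hχu : (χ t : ℝ) ≤ (((k^t/s : ℕ):ℝ) + 1) * ((t:ℝ)*(k:ℝ)+1) := by
      exact_mod_cast hub
    have hstep1 : (((k^t/s : ℕ):ℝ) + 1) ≤ ((t:ℝ)+2) * r^t := by
      have : ((t:ℝ)+1) * r^t + 1 ≤ ((t:ℝ)+2) * r^t := by nlinarith
      linarith
    have hstep2 : ((t:ℝ)*(k:ℝ)+1) ≤ (k:ℝ)*((t:ℝ)+2) := by nlinarith [Nat.cast_nonneg (α := ℝ) t]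
    have hnn1 : (0:ℝ) ≤ ((t:ℝ)*(k:ℝ)+1) := by positivity
    have hnn2 : (0:ℝ) ≤ ((t:ℝ)+2) * r^t := by positivity
    calc (χ t : ℝ) ≤ (((k^t/s : ℕ):ℝ) + 1) * ((t:ℝ)*(k:ℝ)+1) := hχu
      _ ≤ (((t:ℝ)+2) * r^t) * ((k:ℝ)*((t:ℝ)+2)) := by
          refine mul_le_mul hstep1 hstep2 hnn1 hnn2
      _ = (((t:ℝ)+2) * ((k:ℝ)*((t:ℝ)+2))) * r^t := by ring
      _ ≤ ((k:ℝ)*((t:ℝ)+2))^2 * r^t := by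
          have hpoly : ((t:ℝ)+2) * ((k:ℝ)*((t:ℝ)+2)) ≤ ((k:ℝ)*((t:ℝ)+2))^2 := by
            nlinarith [sq_nonneg ((t:ℝ)+2), Nat.cast_nonneg (α := ℝ) t]
          exact mul_le_mul_of_nonneg_right hpoly hrt0
  -- upper limit function
  have hg : Filter.Tendsto (fun t : ℕ => ((k:ℝ)*((t:ℝ)+2))^((2:ℝ)/(t:ℝ)) * r) atTop (nhds r) := by
    have hb : (0:ℝ) ≠ 1/(k:ℝ) := by
      symm; positivity
    have h2 := tendsto_rpow_div_mul_add 2 (1/(k:ℝ)) (-2) hb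
    have hy : Filter.Tendsto (fun t : ℕ => (k:ℝ)*((t:ℝ)+2)) atTop atTop := by
      apply Filter.Tendsto.const_mul_atTop hkpos
      exact tendsto_atTop_add_const_right _ 2 tendsto_natCast_atTop_atTop
    have h3 := h2.comp hy
    have h31 : Filter.Tendsto (fun t : ℕ => ((k:ℝ)*((t:ℝ)+2))^((2:ℝ)/(t:ℝ))) atTop (nhds 1) := by
      refine h3.congr (fun t => ?_)
      simp only [Function.comp_apply]
      congr 1
      have hkne : (k:ℝ) ≠ 0 := ne_of_gt hkpos
      field_simp
      ring
    have := h31.mul_const r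
    rwa [one_mul] at this
  -- squeeze
  refine tendsto_of_tendsto_of_tendsto_of_le_of_le' tendsto_const_nhds hg ?_ ?_
  · filter_upwards [Filter.eventually_ge_atTop 1] with t ht
    have htR : (0:ℝ) < (t:ℝ) := by exact_mod_cast ht
    have hid : ((r:ℝ)^t)^((1:ℝ)/(t:ℝ)) = r := by
      rw [← Real.rpow_natCast r t, ← Real.rpow_mul (le_of_lt hrpos)]
      rw [mul_one_div, div_self (ne_of_gt htR), Real.rpow_one]
    calc r = ((r:ℝ)^t)^((1:ℝ)/(t:ℝ)) := hid.symm
      _ ≤ (χ t : ℝ)^((1:ℝ)/(t:ℝ)) :=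
          Real.rpow_le_rpow (le_of_lt (pow_pos hrpos t)) (hlow t) (by positivity)
  · filter_upwards [Filter.eventually_ge_atTop 1] with t ht
    have htR : (0:ℝ) < (t:ℝ) := by exact_mod_cast ht
    have hX : (0:ℝ) ≤ (k:ℝ)*((t:ℝ)+2) := by positivity
    have h5 : (χ t : ℝ)^((1:ℝ)/(t:ℝ)) ≤ (((k:ℝ)*((t:ℝ)+2))^2 * r^t)^((1:ℝ)/(t:ℝ)) :=
      Real.rpow_le_rpow (Nat.cast_nonneg _) (hupp t) (by positivity)
    refine le_trans h5 (le_of_eq ?_)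
    rw [Real.mul_rpow (by positivity) (le_of_lt (pow_pos hrpos t))]
    congr 1
    · rw [← Real.rpow_natCast ((k:ℝ)*((t:ℝ)+2)) 2, ← Real.rpow_mul hX]
      push_cast
      rw [mul_one_div]
    · rw [← Real.rpow_natCast r t, ← Real.rpow_mul (le_of_lt hrpos)]
      rw [mul_one_div, div_self (ne_of_gt htR), Real.rpow_one]
end

section
/- For every odd integer m > 0, the Dilworth rate of the rotational tournament T⃗_m satisfies R_D(T⃗_m) = log₂(2m/(m+1)); equivalently, χ(T⃗_m^{∧t})^{1/t} → 2m/(m+1) as t → ∞. -/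
open Filter

set_option linter.unusedSectionVars false
set_option linter.deprecated false
set_option linter.unusedVariables false
set_option linter.unusedTactic false


section DilworthAux
open Polynomial

/-- the edge relation of the rotational tournament, with half-degree `h` -/
def rotEd (m h : ℕ) (a b : ZMod m) : Prop := ∃ r : ℕ, 1 ≤ r ∧ r ≤ h ∧ b - a = (r : ZMod m)

variable {m h : ℕ} [NeZero m]

lemma rotEd_iff (hmh : m = 2 * h + 1) {a b : ZMod m} :
    rotEd m h a b ↔ 1 ≤ (b - a).val ∧ (b - a).val ≤ h := by
  constructor
  · rintro ⟨r, h1, h2, hr⟩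
    have hrm : r < m := by omega
    rw [hr, ZMod.val_natCast, Nat.mod_eq_of_lt hrm]
    exact ⟨h1, h2⟩
  · rintro ⟨h1, h2⟩
    exact ⟨(b - a).val, h1, h2, by rw [ZMod.natCast_val, ZMod.cast_id]⟩

lemma rotEd_total (hmh : m = 2 * h + 1) {a b : ZMod m} (hne : a ≠ b) :
    rotEd m h a b ∨ rotEd m h b a := by
  have hd : b - a ≠ 0 := sub_ne_zero.mpr (Ne.symm hne)
  have h1 : 1 ≤ (b - a).val :=
    Nat.one_le_iff_ne_zero.mpr (fun hz => hd (ZMod.val_injective m (by simpa using hz)))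
  have hlt : (b - a).val < m := ZMod.val_lt _
  rcases le_or_gt (b - a).val h with hle | hgt
  · exact Or.inl ((rotEd_iff hmh).mpr ⟨h1, hle⟩)
  · right
    rw [rotEd_iff hmh]
    have : a - b = -(b - a) := by ring
    rw [this, ZMod.neg_val, if_neg hd]
    omega

lemma rotEd_val_lt (hmh : m = 2 * h + 1) {a b : ZMod m} (hab : rotEd m h a b)
    (ha : a.val ≤ h) : a.val < b.val ∧ b.val ≤ a.val + h := by
  obtain ⟨r, h1, h2, hr⟩ := hab
  have hb : b = a + (r : ZMod m) := by rw [← hr]; ring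
  have hrm : r < m := by omega
  have : b.val = a.val + r := by
    rw [hb, ZMod.val_add, ZMod.val_natCast, Nat.mod_eq_of_lt hrm, Nat.mod_eq_of_lt (by omega)]
  omega

lemma rotEd_sub_iff {a b c : ZMod m} : rotEd m h (a - c) (b - c) ↔ rotEd m h a b := by
  unfold rotEd
  have : b - c - (a - c) = b - a := by ring
  rw [this]

/-- Alon's polynomial bound: any set pairwise connected by forward edges in the
AND power has at most (h+1)^t elements. -/
lemma alon_bound (hmh : m = 2 * h + 1) (t : ℕ) (A : Finset (Fin t → ZMod m))
    (hA : ∀ x ∈ A, ∀ y ∈ A, x ≠ y → ∃ i, rotEd m h (x i) (y i)) :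
    A.card ≤ (h + 1) ^ t := by
  classical
  -- single-variable polynomial attached to a vertex
  set q : ZMod m → Polynomial ℚ :=
    fun a => ∏ r ∈ Finset.Icc 1 h, (X - C (((a + (r : ZMod m)).val : ℚ))) with hq
  have hqdeg : ∀ a, (q a).natDegree < h + 1 := by
    intro a
    have := Polynomial.natDegree_prod_le (Finset.Icc 1 h)
      (fun r => (X - C (((a + (r : ZMod m)).val : ℚ))))
    have h1 : ∀ r ∈ Finset.Icc 1 h, (X - C (((a + (r : ZMod m)).val : ℚ))).natDegree = 1 :=
      fun r _ => Polynomial.natDegree_X_sub_C _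
    calc (q a).natDegree ≤ ∑ r ∈ Finset.Icc 1 h, (X - C (((a + (r : ZMod m)).val : ℚ))).natDegree := this
      _ = ∑ r ∈ Finset.Icc 1 h, 1 := Finset.sum_congr rfl h1
      _ = h := by simp [Nat.card_Icc]
      _ < h + 1 := Nat.lt_succ_self h
  -- the function family
  set f : (Fin t → ZMod m) → ((Fin t → ZMod m) → ℚ) :=
    fun x y => ∏ i, (q (x i)).eval (((y i).val : ℚ)) with hf
  have hdiag : ∀ x, f x x ≠ 0 := by
    intro x
    rw [hf]
    apply Finset.prod_ne_zero_iff.mpr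
    intro i _
    rw [hq, Polynomial.eval_prod]
    apply Finset.prod_ne_zero_iff.mpr
    intro r hr
    simp only [Polynomial.eval_sub, Polynomial.eval_X, Polynomial.eval_C, sub_ne_zero]
    intro hcontra
    have hval : (x i).val = (x i + (r : ZMod m)).val := by exact_mod_cast hcontra
    have : x i = x i + (r : ZMod m) := ZMod.val_injective m hval
    have hr0 : (r : ZMod m) ≠ 0 := by
      simp only [Finset.mem_Icc] at hr
      intro hz
      have := ZMod.val_natCast (n := m) r
      rw [hz] at this
      simp only [ZMod.val_zero] at this
      have : r % m = r := Nat.mod_eq_of_lt (by omega)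
      omega
    exact hr0 (by linear_combination -this)
  have hoff : ∀ x ∈ A, ∀ y ∈ A, x ≠ y → f x y = 0 := by
    intro x hx y hy hne
    obtain ⟨i, r, hr1, hr2, hri⟩ := hA x hx y hy hne
    rw [hf]
    apply Finset.prod_eq_zero (Finset.mem_univ i)
    rw [hq, Polynomial.eval_prod]
    apply Finset.prod_eq_zero (Finset.mem_Icc.mpr ⟨hr1, hr2⟩)
    have : y i = x i + (r : ZMod m) := by rw [← hri]; ring
    rw [← this]
    simp
  -- span of monomial functions
  set M : (Fin t → Fin (h + 1)) → ((Fin t → ZMod m) → ℚ) :=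
    fun e y => ∏ i, (((y i).val : ℚ)) ^ (e i : ℕ) with hM
  set W : Submodule ℚ ((Fin t → ZMod m) → ℚ) := Submodule.span ℚ (Set.range M) with hW
  have hmem : ∀ x, f x ∈ W := by
    intro x
    have hexp : f x = ∑ e : Fin t → Fin (h + 1), (∏ i, (q (x i)).coeff (e i)) • M e := by
      funext y
      rw [hf]
      have h1 : ∀ i : Fin t, (q (x i)).eval (((y i).val : ℚ))
          = ∑ d : Fin (h + 1), (q (x i)).coeff d * (((y i).val : ℚ)) ^ (d : ℕ) := by
        intro i
        rw [Polynomial.eval_eq_sum_range' (hqdeg (x i)), ← Fin.sum_univ_eq_sum_range]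
      calc (∏ i, (q (x i)).eval (((y i).val : ℚ)))
          = ∏ i, ∑ d ∈ (Finset.univ : Finset (Fin (h+1))), (q (x i)).coeff d * (((y i).val : ℚ)) ^ (d : ℕ) := by
            exact Finset.prod_congr rfl (fun i _ => h1 i)
        _ = ∑ e ∈ Fintype.piFinset (fun _ : Fin t => (Finset.univ : Finset (Fin (h+1)))),
              ∏ i, (q (x i)).coeff (e i) * (((y i).val : ℚ)) ^ (e i : ℕ) :=
            Finset.prod_univ_sum _ _
        _ = ∑ e : Fin t → Fin (h + 1), (∏ i, (q (x i)).coeff (e i)) • M e y := by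
            rw [Fintype.piFinset_univ]
            refine Finset.sum_congr rfl (fun e _ => ?_)
            rw [hM, smul_eq_mul, ← Finset.prod_mul_distrib]
        _ = (∑ e : Fin t → Fin (h + 1), (∏ i, (q (x i)).coeff (e i)) • M e) y := by
            rw [Finset.sum_apply]
            rfl
    rw [hexp]
    exact Submodule.sum_mem _ (fun e _ =>
      Submodule.smul_mem _ _ (Submodule.subset_span ⟨e, rfl⟩))
  -- linear independence
  have hli : LinearIndependent ℚ (fun a : A => f (a : Fin t → ZMod m)) := by
    rw [linearIndependent_iff']
    intro s c hsum a ha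
    have := congrFun hsum (a : Fin t → ZMod m)
    rw [Finset.sum_apply] at this
    simp only [Pi.smul_apply, smul_eq_mul, Pi.zero_apply] at this
    rw [Finset.sum_eq_single a] at this
    · rcases mul_eq_zero.mp this with hc | hfa
      · exact hc
      · exact absurd hfa (hdiag _)
    · intro b hb hba
      rw [hoff _ b.2 _ a.2 (fun hcontra => hba (Subtype.ext hcontra)), mul_zero]
    · intro hna
      exact absurd ha hna
  -- dimension count
  have hfin : Module.Finite ℚ W := by
    rw [hW]
    exact Module.Finite.span_of_finite ℚ (Set.finite_range M)
  have hli' : LinearIndependent ℚ (fun a : A => (⟨f (a : Fin t → ZMod m), hmem _⟩ : W)) := by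
    have hcomp : (fun a : A => f (a : Fin t → ZMod m))
        = W.subtype ∘ (fun a : A => (⟨f (a : Fin t → ZMod m), hmem _⟩ : W)) := rfl
    rw [hcomp] at hli
    exact LinearIndependent.of_comp W.subtype hli
  have hcard : Fintype.card A ≤ Module.finrank ℚ W :=
    hli'.fintype_card_le_finrank
  have hrank : Module.finrank ℚ W ≤ (h + 1) ^ t := by
    have h1 := finrank_span_le_card (R := ℚ) (Set.range M)
    have h2 : (Set.range M).toFinset.card ≤ Fintype.card (Fin t → Fin (h + 1)) := by
      rw [Set.toFinset_range]
      exact Finset.card_image_le.trans (by simp)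
    calc Module.finrank ℚ W ≤ (Set.range M).toFinset.card := h1
      _ ≤ Fintype.card (Fin t → Fin (h + 1)) := h2
      _ = (h + 1) ^ t := by simp [Fintype.card_fun]
  calc A.card = Fintype.card A := (Fintype.card_coe A).symm
    _ ≤ Module.finrank ℚ W := hcard
    _ ≤ (h + 1) ^ t := hrank

/-- lower bound: every proper coloring uses at least m^t/(h+1)^t colors -/
lemma coloring_lower (hmh : m = 2 * h + 1) (t n : ℕ)
    (c : (Fin t → ZMod m) → Fin n)
    (hc : ∀ u v, andPow (rotEd m h) t u v → c u ≠ c v) :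
    m ^ t ≤ n * (h + 1) ^ t := by
  classical
  have hcard : (Finset.univ : Finset (Fin t → ZMod m)).card = m ^ t := by
    simp [ZMod.card]
  have hsplit := Finset.card_eq_sum_card_fiberwise
    (f := c) (s := (Finset.univ : Finset (Fin t → ZMod m))) (t := Finset.univ)
    (fun x _ => Finset.mem_univ _)
  have hfiber : ∀ j : Fin n,
      (Finset.filter (fun a => c a = j) Finset.univ).card ≤ (h + 1) ^ t := by
    intro j
    apply alon_bound hmh
    intro x hx y hy hne
    simp only [Finset.mem_filter] at hx hy
    have hcxy : c x = c y := by rw [hx.2, hy.2]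
    -- no edge y → x in the power (same color)
    have hnyx : ¬ andPow (rotEd m h) t y x := fun he => (hc y x he) (by rw [hcxy])
    unfold andPow at hnyx
    push_neg at hnyx
    obtain ⟨i, hi1, hi2⟩ := hnyx (Ne.symm hne)
    rcases rotEd_total hmh (a := x i) (b := y i) (fun he => hi1 he.symm) with hxy | hyx
    · exact ⟨i, hxy⟩
    · exact absurd hyx hi2
  calc m ^ t = ∑ j : Fin n, (Finset.filter (fun a => c a = j) Finset.univ).card := by
        rw [← hcard, hsplit]
    _ ≤ ∑ _j : Fin n, (h + 1) ^ t := Finset.sum_le_sum (fun j _ => hfiber j)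
    _ = n * (h + 1) ^ t := by simp [Finset.sum_const, mul_comm]

/-- a layer of the box is independent (no edge in the given direction) -/
lemma layer_indep (hmh : m = 2 * h + 1) (t s₀ : ℕ)
    {x y : Fin t → ZMod m}
    (hx1 : ∀ i, (x i).val ≤ h) (hx2 : ∑ i, (x i).val = s₀)
    (hy1 : ∀ i, (y i).val ≤ h) (hy2 : ∑ i, (y i).val = s₀) :
    ¬ andPow (rotEd m h) t x y := by
  rintro ⟨hne, hall⟩
  have hle : ∀ i, (x i).val ≤ (y i).val := by
    intro i
    rcases hall i with he | hed
    · rw [he]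
    · exact le_of_lt (rotEd_val_lt hmh hed (hx1 i)).1
  obtain ⟨i, hi⟩ := Function.ne_iff.mp hne
  have hlt : (x i).val < (y i).val := by
    rcases hall i with he | hed
    · exact absurd he hi
    · exact (rotEd_val_lt hmh hed (hx1 i)).1
  have : ∑ i, (x i).val < ∑ i, (y i).val :=
    Finset.sum_lt_sum (fun j _ => hle j) ⟨i, Finset.mem_univ i, hlt⟩
  omega

/-- There is a layer of the box with many elements. -/
lemma exists_big_layer (hmh : m = 2 * h + 1) (t : ℕ) :
    ∃ s₀ : ℕ, (h + 1) ^ t ≤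
      (Finset.filter (fun x : Fin t → ZMod m =>
        (∀ i, (x i).val ≤ h) ∧ ∑ i, (x i).val = s₀) Finset.univ).card * (t * h + 1) := by
  classical
  set Box : Finset (Fin t → ZMod m) :=
    Finset.filter (fun x => ∀ i, (x i).val ≤ h) Finset.univ with hBox
  -- Box has (h+1)^t elements
  have hboxm : (Finset.filter (fun a : ZMod m => a.val ≤ h) Finset.univ).card = h + 1 := by
    have himg : Finset.filter (fun a : ZMod m => a.val ≤ h) Finset.univ
        = Finset.image (fun r : ℕ => (r : ZMod m)) (Finset.range (h + 1)) := by
      ext a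
      simp only [Finset.mem_filter, Finset.mem_univ, true_and, Finset.mem_image,
        Finset.mem_range]
      constructor
      · intro ha
        exact ⟨a.val, by omega, by rw [ZMod.natCast_val, ZMod.cast_id]⟩
      · rintro ⟨r, hr, rfl⟩
        rw [ZMod.val_natCast, Nat.mod_eq_of_lt (by omega)]
        omega
    rw [himg, Finset.card_image_of_injOn, Finset.card_range]
    intro a ha b hb hab
    simp only [Finset.coe_range, Set.mem_Iio] at ha hb
    have := congrArg ZMod.val hab
    rwa [ZMod.val_natCast, ZMod.val_natCast, Nat.mod_eq_of_lt (by omega),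
      Nat.mod_eq_of_lt (by omega)] at this
  have hboxcard : Box.card = (h + 1) ^ t := by
    have : Box = Fintype.piFinset (fun _ : Fin t =>
        Finset.filter (fun a : ZMod m => a.val ≤ h) Finset.univ) := by
      ext x
      simp [hBox, Fintype.mem_piFinset]
    rw [this, Fintype.card_piFinset]
    simp [hboxm]
  -- sums of elements of Box lie in range (t*h+1)
  have hmap : ∀ x ∈ Box, (∑ i, (x i).val) ∈ Finset.range (t * h + 1) := by
    intro x hx
    simp only [hBox, Finset.mem_filter] at hx
    rw [Finset.mem_range]
    calc ∑ i, (x i).val ≤ ∑ _i : Fin t, h := Finset.sum_le_sum (fun i _ => hx.2 i)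
      _ = t * h := by simp [mul_comm]
      _ < t * h + 1 := Nat.lt_succ_self _
  have hsplit := Finset.card_eq_sum_card_fiberwise hmap
  -- pigeonhole
  by_contra hcon
  push_neg at hcon
  have hlt : ∀ s₀ ∈ Finset.range (t * h + 1),
      (Finset.filter (fun x => ∑ i, (x i).val = s₀) Box).card * (t * h + 1) < (h+1)^t := by
    intro s₀ _
    have h1 := hcon s₀
    have : Finset.filter (fun x => ∑ i, (x i).val = s₀) Box
        = Finset.filter (fun x : Fin t → ZMod m =>
          (∀ i, (x i).val ≤ h) ∧ ∑ i, (x i).val = s₀) Finset.univ := by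
      rw [hBox, Finset.filter_filter]
    rw [this]
    exact h1
  have hsum : Box.card * (t * h + 1) < (h+1)^t * (t * h + 1) := by
    rw [hsplit, Finset.sum_mul]
    have h0 : (Finset.range (t * h + 1)).Nonempty := ⟨0, by simp⟩
    calc ∑ s₀ ∈ Finset.range (t*h+1),
          (Finset.filter (fun x => ∑ i, (x i).val = s₀) Box).card * (t*h+1)
        < ∑ _s₀ ∈ Finset.range (t*h+1), (h+1)^t := Finset.sum_lt_sum_of_nonempty h0 hlt
      _ = (t*h+1) * (h+1)^t := by simp [Finset.sum_const, Finset.card_range]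
      _ = (h+1)^t * (t*h+1) := mul_comm _ _
    -- done
  rw [hboxcard] at hsum
  exact lt_irrefl _ hsum

/-- Covering step: some translate of S covers many elements of U. -/
lemma cover_step {V : Type*} [Fintype V] [DecidableEq V] [AddCommGroup V]
    (S : Finset V) (U : Finset V) (hU : U.Nonempty) :
    ∃ g : V, U.card * S.card ≤ (Finset.filter (fun v => v - g ∈ S) U).card * Fintype.card V := by
  classical
  have hdouble : ∑ g : V, (Finset.filter (fun v => v - g ∈ S) U).card = U.card * S.card := by
    have h1 : ∀ g : V, (Finset.filter (fun v => v - g ∈ S) U).card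
        = ∑ v ∈ U, (if v - g ∈ S then 1 else 0) := by
      intro g
      rw [Finset.card_filter]
    calc ∑ g : V, (Finset.filter (fun v => v - g ∈ S) U).card
        = ∑ g : V, ∑ v ∈ U, (if v - g ∈ S then 1 else 0) := Finset.sum_congr rfl (fun g _ => h1 g)
      _ = ∑ v ∈ U, ∑ g : V, (if v - g ∈ S then 1 else 0) := Finset.sum_comm
      _ = ∑ v ∈ U, S.card := by
          refine Finset.sum_congr rfl (fun v _ => ?_)
          rw [← Finset.card_filter]
          have : Finset.filter (fun g => v - g ∈ S) Finset.univ
              = Finset.image (fun s => v - s) S := by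
            ext g
            simp only [Finset.mem_filter, Finset.mem_univ, true_and, Finset.mem_image]
            constructor
            · intro hg
              exact ⟨v - g, hg, sub_sub_cancel v g⟩
            · rintro ⟨s, hs, rfl⟩
              simpa using hs
          rw [this, Finset.card_image_of_injective _ sub_right_injective]
      _ = U.card * S.card := by rw [Finset.sum_const, smul_eq_mul]
  have hVne : (Finset.univ : Finset V).Nonempty := ⟨hU.choose + 0, Finset.mem_univ _⟩
  have heq : ∑ _g : V, U.card * S.card
      = ∑ g : V, (Finset.filter (fun v => v - g ∈ S) U).card * Fintype.card V := by
    rw [Finset.sum_const, ← Finset.sum_mul, hdouble, Finset.card_univ, smul_eq_mul]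
    ring
  obtain ⟨g, _, hg⟩ := Finset.exists_le_of_sum_le hVne (le_of_eq heq)
  exact ⟨g, hg⟩

lemma cover_iter {V : Type*} [Fintype V] [DecidableEq V] [AddCommGroup V]
    (S : Finset V) (hSN : S.card ≤ Fintype.card V) (j : ℕ) :
    ∃ L : List V, L.length = j ∧
      (Finset.filter (fun v => ∀ g ∈ L, v - g ∉ S) Finset.univ).card * (Fintype.card V) ^ j
        ≤ Fintype.card V * (Fintype.card V - S.card) ^ j := by
  classical
  induction j with
  | zero =>
    refine ⟨[], rfl, ?_⟩
    simp [Finset.card_univ]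
  | succ j ih =>
    obtain ⟨L, hlen, hbound⟩ := ih
    set W : Finset V := Finset.filter (fun v => ∀ g ∈ L, v - g ∉ S) Finset.univ with hW
    rcases W.eq_empty_or_nonempty with hWe | hWne
    · refine ⟨L ++ [0], by simp [hlen], ?_⟩
      have hsub : Finset.filter (fun v => ∀ g ∈ L ++ [0], v - g ∉ S) Finset.univ ⊆ W := by
        intro v hv
        rw [hW]
        simp only [Finset.mem_filter, Finset.mem_univ, true_and, List.mem_append,
          List.mem_singleton] at hv ⊢
        exact fun g hg => hv g (Or.inl hg)
      have : Finset.filter (fun v => ∀ g ∈ L ++ [0], v - g ∉ S) Finset.univ = ∅ :=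
        Finset.subset_empty.mp (hWe ▸ hsub)
      rw [this]
      simp
    · obtain ⟨g, hg⟩ := cover_step S W hWne
      refine ⟨L ++ [g], by simp [hlen], ?_⟩
      set N := Fintype.card V
      set s := S.card
      set W' : Finset V := Finset.filter (fun v => ∀ g' ∈ L ++ [g], v - g' ∉ S) Finset.univ
        with hW'
      have hW'eq : W' = Finset.filter (fun v => v - g ∉ S) W := by
        rw [hW', hW, Finset.filter_filter]
        apply Finset.filter_congr
        intro v _
        simp only [List.mem_append, List.mem_singleton]
        constructor
        · intro hv
          exact ⟨fun g' hg' => hv g' (Or.inl hg'), hv g (Or.inr rfl)⟩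
        · rintro ⟨h1, h2⟩ g' hg'
          rcases hg' with hg' | rfl
          · exact h1 g' hg'
          · exact h2
      have hsplitW : W'.card + (Finset.filter (fun v => v - g ∈ S) W).card = W.card := by
        rw [hW'eq]
        rw [add_comm]
        exact Finset.card_filter_add_card_filter_not _
      have hkey : W'.card * N ≤ W.card * (N - s) := by
        have h1 : W'.card * N + (Finset.filter (fun v => v - g ∈ S) W).card * N = W.card * N := by
          rw [← Nat.add_mul, hsplitW]
        have h2 : W.card * (N - s) + W.card * s = W.card * N := by
          rw [← Nat.mul_add, Nat.sub_add_cancel hSN]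
        have h3 : W'.card * N + W.card * s ≤ W'.card * N
            + (Finset.filter (fun v => v - g ∈ S) W).card * N :=
          Nat.add_le_add_left hg _
        omega
      calc W'.card * N ^ (j + 1) = (W'.card * N) * N ^ j := by ring
        _ ≤ (W.card * (N - s)) * N ^ j := Nat.mul_le_mul_right _ hkey
        _ = (N - s) * (W.card * N ^ j) := by ring
        _ ≤ (N - s) * (N * (N - s) ^ j) := Nat.mul_le_mul_left _ hbound
        _ = N * (N - s) ^ (j + 1) := by ring

lemma cover_exists {V : Type*} [Fintype V] [DecidableEq V] [AddCommGroup V]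
    (S : Finset V) (hSN : S.card ≤ Fintype.card V) (j : ℕ)
    (hnum : Fintype.card V * (Fintype.card V - S.card) ^ j < (Fintype.card V) ^ j) :
    ∃ L : List V, L.length = j ∧ ∀ v : V, ∃ g ∈ L, v - g ∈ S := by
  classical
  obtain ⟨L, hlen, hbound⟩ := cover_iter S hSN j
  refine ⟨L, hlen, fun v => ?_⟩
  by_contra hcon
  push_neg at hcon
  have hv : v ∈ Finset.filter (fun v => ∀ g ∈ L, v - g ∉ S) Finset.univ := by
    simp only [Finset.mem_filter, Finset.mem_univ, true_and]
    exact hcon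
  have h1 : 1 ≤ (Finset.filter (fun v => ∀ g ∈ L, v - g ∉ S) Finset.univ).card :=
    Finset.card_pos.mpr ⟨v, hv⟩
  have : (Fintype.card V) ^ j ≤ Fintype.card V * (Fintype.card V - S.card) ^ j :=
    le_trans (by simpa using Nat.mul_le_mul_right ((Fintype.card V)^j) h1) hbound
  omega

lemma coloring_from_cover {V : Type*} [DecidableEq V] [AddCommGroup V]
    (R : V → V → Prop) (hRt : ∀ u v g : V, R u v → R (u - g) (v - g))
    (S : Finset V) (hind : ∀ x ∈ S, ∀ y ∈ S, ¬ R x y)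
    (L : List V) (hcov : ∀ v : V, ∃ g ∈ L, v - g ∈ S) :
    ∃ c : V → Fin L.length, ∀ u v, R u v → c u ≠ c v := by
  classical
  have hlt : ∀ v : V, L.findIdx (fun g => decide (v - g ∈ S)) < L.length := by
    intro v
    apply List.findIdx_lt_length_of_exists
    obtain ⟨g, hg, hgs⟩ := hcov v
    exact ⟨g, hg, decide_eq_true hgs⟩
  refine ⟨fun v => ⟨L.findIdx (fun g => decide (v - g ∈ S)), hlt v⟩, ?_⟩
  intro u v hR heq
  simp only [Fin.mk.injEq] at heq
  set iu := L.findIdx (fun g => decide (u - g ∈ S)) with hiu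
  have hu : u - L.get ⟨iu, hlt u⟩ ∈ S := of_decide_eq_true (List.findIdx_getElem (w := hlt u))
  have hv : v - L.get ⟨iu, hlt u⟩ ∈ S := by
    have hv' : v - L.get ⟨L.findIdx (fun g => decide (v - g ∈ S)), hlt v⟩ ∈ S :=
      of_decide_eq_true (List.findIdx_getElem (w := hlt v))
    have : (⟨iu, hlt u⟩ : Fin L.length) = ⟨L.findIdx (fun g => decide (v - g ∈ S)), hlt v⟩ := by
      apply Fin.ext
      exact heq
    rw [this]
    exact hv'
  exact hind _ hu _ hv (hRt u v _ hR)

lemma numeric_cover (N s j : ℕ) (hs1 : 1 ≤ s) (hsN : s ≤ N)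
    (hj : ((N : ℝ) / s) * Real.log N + 1 ≤ j) : N * (N - s) ^ j < N ^ j := by
  have hN1 : 1 ≤ N := le_trans hs1 hsN
  have hj1 : 1 ≤ j := by
    by_contra hcon
    push_neg at hcon
    interval_cases j
    have h1 : 0 ≤ ((N : ℝ) / s) * Real.log N := by
      apply mul_nonneg
      · positivity
      · exact Real.log_natCast_nonneg N
    simp only [Nat.cast_zero] at hj
    linarith
  rcases eq_or_lt_of_le hsN with heq | hlt
  · rw [heq]
    simp only [Nat.sub_self]
    rw [zero_pow (by omega)]
    rw [mul_zero]
    exact pow_pos (by omega) j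
  -- real-number argument
  have hN0 : (0:ℝ) < N := by exact_mod_cast hN1
  have hs0 : (0:ℝ) < s := by exact_mod_cast hs1
  set x : ℝ := (s : ℝ) / N with hx
  have hx0 : 0 < x := by positivity
  have hx1 : x ≤ 1 := by
    rw [hx, div_le_one hN0]
    exact_mod_cast hsN
  have hxj : Real.log N + x ≤ x * j := by
    have h1 : x * (((N : ℝ) / s) * Real.log N + 1) ≤ x * j :=
      mul_le_mul_of_nonneg_left hj (le_of_lt hx0)
    have h2 : x * ((N : ℝ) / s) = 1 := by
      rw [hx]
      field_simp
    calc Real.log N + x = x * ((N : ℝ) / s) * Real.log N + x * 1 := by rw [h2]; ring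
      _ = x * (((N : ℝ) / s) * Real.log N + 1) := by ring
      _ ≤ x * j := h1
  have hNexp : (N : ℝ) < Real.exp (x * j) := by
    calc (N : ℝ) = Real.exp (Real.log N) := (Real.exp_log hN0).symm
      _ < Real.exp (x * j) := Real.exp_lt_exp.mpr (by linarith)
  -- cast the target
  have hcast : ((N - s : ℕ) : ℝ) = (N : ℝ) - s := by
    rw [Nat.cast_sub hsN]
  rw [← Nat.cast_lt (α := ℝ)]
  push_cast [hcast]
  have hsub : (N : ℝ) - s = (N : ℝ) * (1 - x) := by
    rw [hx]
    field_simp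
  have h1x : (0:ℝ) ≤ 1 - x := by linarith
  have hexp1 : (1 : ℝ) - x ≤ Real.exp (-x) := by
    have := Real.add_one_le_exp (-x)
    linarith
  have hpow : ((N : ℝ) - s) ^ j ≤ (N : ℝ) ^ j * Real.exp (-x) ^ j := by
    rw [hsub, mul_pow]
    apply mul_le_mul_of_nonneg_left _ (by positivity)
    exact pow_le_pow_left₀ h1x hexp1 j
  have hexpj : Real.exp (-x) ^ j = Real.exp (-(x * j)) := by
    rw [← Real.exp_nat_mul]
    ring_nf
  calc (N : ℝ) * ((N : ℝ) - s) ^ j ≤ (N : ℝ) * ((N : ℝ) ^ j * Real.exp (-(x * j))) := by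
        rw [← hexpj]
        exact mul_le_mul_of_nonneg_left hpow (le_of_lt hN0)
    _ = (N : ℝ) ^ j * ((N : ℝ) * Real.exp (-(x * j))) := by ring
    _ < (N : ℝ) ^ j * 1 := by
        apply mul_lt_mul_of_pos_left _ (by positivity)
        rw [Real.exp_neg]
        rw [mul_inv_lt_iff₀ (Real.exp_pos _)]
        simpa using hNexp
    _ = (N : ℝ) ^ j := mul_one _

lemma andPow_sub (t : ℕ) (u v g : Fin t → ZMod m)
    (hR : andPow (rotEd m h) t u v) : andPow (rotEd m h) t (u - g) (v - g) := by
  obtain ⟨hne, hall⟩ := hR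
  refine ⟨fun heq => hne (sub_left_injective heq), fun i => ?_⟩
  rcases hall i with he | hed
  · left
    simp only [Pi.sub_apply, he]
  · right
    simp only [Pi.sub_apply]
    exact rotEd_sub_iff.mpr hed

/-- main quantitative bounds -/
lemma chrom_bounds (hmh : m = 2 * h + 1) (t : ℕ) :
    m ^ t ≤ chromNum (andPow (rotEd m h) t) * (h + 1) ^ t ∧
    ∃ j : ℕ, chromNum (andPow (rotEd m h) t) ≤ j ∧
      (j : ℝ) ≤ ((m ^ t : ℝ) * (t * h + 1) / ((h : ℝ) + 1) ^ t) * Real.log (m ^ t : ℕ) + 2 := by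
  classical
  constructor
  · -- lower bound
    have hne : {n : ℕ | ∃ c : (Fin t → ZMod m) → Fin n,
        ∀ u v, andPow (rotEd m h) t u v → c u ≠ c v}.Nonempty := by
      refine ⟨Fintype.card (Fin t → ZMod m), Fintype.equivFin _, fun u v he hc => ?_⟩
      exact he.1 ((Fintype.equivFin _).injective hc)
    obtain ⟨c, hc⟩ := Nat.sInf_mem hne
    exact coloring_lower hmh t _ c hc
  · -- upper bound
    set V := (Fin t → ZMod m)
    set S : Finset V := Finset.filter (fun x : V =>
        (∀ i, (x i).val ≤ h) ∧ ∑ i, (x i).val = (exists_big_layer hmh t).choose)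
        Finset.univ with hS
    have hSbig : (h + 1) ^ t ≤ S.card * (t * h + 1) := (exists_big_layer hmh t).choose_spec
    have hcardV : Fintype.card V = m ^ t := by
      simp [V, ZMod.card]
    set N := m ^ t with hN
    set s := S.card with hs
    have hs1 : 1 ≤ s := by
      rcases Nat.eq_zero_or_pos s with h0 | h1
      · rw [h0, zero_mul] at hSbig
        have : 0 < (h+1)^t := pow_pos (Nat.succ_pos h) t
        omega
      · exact h1
    have hsN : s ≤ N := le_trans (Finset.card_le_univ S) (le_of_eq hcardV)
    set j := ⌈((N : ℝ) / s) * Real.log N⌉₊ + 1 with hj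
    have hjle : ((N : ℝ) / s) * Real.log N + 1 ≤ (j : ℝ) := by
      rw [hj]
      push_cast
      have := Nat.le_ceil (((N : ℝ) / s) * Real.log N)
      linarith
    have hnum : N * (N - s) ^ j < N ^ j := numeric_cover N s j hs1 hsN hjle
    have hnum' : Fintype.card V * (Fintype.card V - S.card) ^ j < (Fintype.card V) ^ j := by
      rw [hcardV]
      exact hnum
    obtain ⟨L, hlen, hcov⟩ := cover_exists S (Finset.card_le_univ S) j hnum'
    have hind : ∀ x ∈ S, ∀ y ∈ S, ¬ andPow (rotEd m h) t x y := by
      intro x hx y hy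
      rw [hS, Finset.mem_filter] at hx hy
      exact layer_indep hmh t _ hx.2.1 hx.2.2 hy.2.1 hy.2.2
    obtain ⟨c, hc⟩ := coloring_from_cover (andPow (rotEd m h) t)
      (fun u v g => andPow_sub t u v g) S hind L hcov
    have hchrom : chromNum (andPow (rotEd m h) t) ≤ L.length := Nat.sInf_le ⟨c, hc⟩
    refine ⟨j, by rwa [hlen] at hchrom, ?_⟩
    -- real bound on j
    have hlogN : (0:ℝ) ≤ Real.log N := Real.log_natCast_nonneg N
    have hs0 : (0:ℝ) < s := by exact_mod_cast Nat.lt_of_lt_of_le Nat.zero_lt_one hs1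
    have hpow0 : (0:ℝ) < ((h:ℝ) + 1) ^ t := by positivity
    have hNs : (N : ℝ) / s ≤ (N : ℝ) * (t * h + 1) / ((h:ℝ) + 1) ^ t := by
      rw [div_le_div_iff₀ hs0 hpow0]
      have hcast : ((h:ℝ) + 1) ^ t ≤ (s : ℝ) * ((t:ℝ) * h + 1) := by
        have := hSbig
        push_cast
        exact_mod_cast this
      calc (N:ℝ) * ((h:ℝ)+1)^t ≤ (N:ℝ) * ((s:ℝ) * ((t:ℝ)*h+1)) :=
            mul_le_mul_of_nonneg_left hcast (Nat.cast_nonneg N)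
        _ = (N:ℝ) * ((t:ℝ)*h+1) * s := by ring
    have hceil : (⌈((N : ℝ) / s) * Real.log N⌉₊ : ℝ) < ((N : ℝ) / s) * Real.log N + 1 :=
      Nat.ceil_lt_add_one (mul_nonneg (div_nonneg (Nat.cast_nonneg N) (Nat.cast_nonneg s)) hlogN)
    have hjreal : (j : ℝ) ≤ ((N : ℝ) / s) * Real.log N + 2 := by
      rw [hj]
      push_cast
      linarith
    calc (j : ℝ) ≤ ((N : ℝ) / s) * Real.log N + 2 := hjreal
      _ ≤ ((N : ℝ) * (t * h + 1) / ((h:ℝ) + 1) ^ t) * Real.log N + 2 := by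
          have := mul_le_mul_of_nonneg_right hNs hlogN
          linarith
      _ = ((m ^ t : ℝ) * (t * h + 1) / ((h : ℝ) + 1) ^ t) * Real.log (m ^ t : ℕ) + 2 := by
          rw [hN]
          push_cast
          ring

end DilworthAux

lemma rpow_pow_inv {x : ℝ} (hx : 0 ≤ x) {t : ℕ} (ht : t ≠ 0) :
    (x ^ t) ^ (1 / (t : ℝ)) = x := by
  rw [← Real.rpow_natCast x t, ← Real.rpow_mul hx,
    mul_one_div_cancel (Nat.cast_ne_zero.mpr ht : (t:ℝ) ≠ 0), Real.rpow_one]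

lemma main_limit (m h : ℕ) [NeZero m] (hmh : m = 2 * h + 1) :
    Tendsto (fun t : ℕ => (chromNum (andPow (rotEd m h) t) : ℝ) ^ (1 / (t : ℝ)))
      atTop (nhds ((m : ℝ) / ((h : ℝ) + 1))) := by
  set ρ : ℝ := (m : ℝ) / ((h : ℝ) + 1) with hρ
  have hh0 : (0:ℝ) < (h:ℝ) + 1 := by positivity
  have hm1 : (1:ℝ) ≤ (m:ℝ) := by
    have : 1 ≤ m := by omega
    exact_mod_cast this
  have hρ1 : 1 ≤ ρ := by
    rw [hρ, le_div_iff₀ hh0, one_mul]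
    have : h + 1 ≤ m := by omega
    exact_mod_cast this
  have hρ0 : 0 < ρ := lt_of_lt_of_le one_pos hρ1
  set D : ℝ := ((h:ℝ) + 1) * m + 2 with hD
  have hD0 : 0 < D := by positivity
  set n : ℕ → ℕ := fun t => chromNum (andPow (rotEd m h) t) with hn
  -- eventual lower bound
  have hlowev : ∀ᶠ t : ℕ in atTop, ρ ≤ (n t : ℝ) ^ (1 / (t : ℝ)) := by
    filter_upwards [eventually_ge_atTop 1] with t ht
    have ht0 : t ≠ 0 := by omega
    have hlowN := (chrom_bounds hmh t).1
    have hlow : (m:ℝ) ^ t ≤ (n t : ℝ) * ((h:ℝ) + 1) ^ t := by exact_mod_cast hlowN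
    have hρt : ρ ^ t ≤ (n t : ℝ) := by
      rw [hρ, div_pow, div_le_iff₀ (by positivity)]
      exact hlow
    calc ρ = (ρ ^ t) ^ (1 / (t:ℝ)) := (rpow_pow_inv (le_of_lt hρ0) ht0).symm
      _ ≤ (n t : ℝ) ^ (1 / (t:ℝ)) :=
        Real.rpow_le_rpow (by positivity) hρt (by positivity)
  -- eventual upper bound
  have hupev : ∀ᶠ t : ℕ in atTop,
      (n t : ℝ) ^ (1 / (t : ℝ)) ≤ ρ * (D ^ (1 / (t:ℝ)) * (((t:ℝ)) ^ (1 / (t:ℝ))) ^ 2) := by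
    filter_upwards [eventually_ge_atTop 1] with t ht
    have ht0 : t ≠ 0 := by omega
    have ht1 : (1:ℝ) ≤ (t:ℝ) := by exact_mod_cast ht
    obtain ⟨j, hnj, hjb⟩ := (chrom_bounds hmh t).2
    have hlog : Real.log ((m ^ t : ℕ) : ℝ) = (t:ℝ) * Real.log m := by
      push_cast
      rw [Real.log_pow]
    have hlogm : 0 ≤ Real.log m := Real.log_natCast_nonneg m
    have hlogm2 : Real.log m ≤ (m:ℝ) := by
      have := Real.log_le_sub_one_of_pos (lt_of_lt_of_le one_pos hm1)
      linarith
    have hρpow : (m ^ t : ℝ) / ((h:ℝ) + 1) ^ t = ρ ^ t := by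
      rw [hρ, div_pow]
    have hbound : (n t : ℝ) ≤ ρ ^ t * (D * (t:ℝ) ^ 2) := by
      have h1 : (n t : ℝ) ≤ (j : ℝ) := by exact_mod_cast hnj
      have h2 : ((m ^ t : ℝ) * ((t:ℝ) * h + 1) / ((h : ℝ) + 1) ^ t) * Real.log ((m ^ t : ℕ) : ℝ)
          = ρ ^ t * ((t:ℝ) * h + 1) * ((t:ℝ) * Real.log m) := by
        rw [hlog, ← hρpow]
        ring
      have h3 : ρ ^ t * ((t:ℝ) * h + 1) * ((t:ℝ) * Real.log m)
          ≤ ρ ^ t * ((t:ℝ) * ((h:ℝ)+1)) * ((t:ℝ) * m) := by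
        have hb : (t:ℝ) * h + 1 ≤ (t:ℝ) * ((h:ℝ)+1) := by nlinarith
        have hc : (t:ℝ) * Real.log m ≤ (t:ℝ) * m := by nlinarith
        have h0a : (0:ℝ) ≤ ρ ^ t := by positivity
        have hmul : ((t:ℝ) * h + 1) * ((t:ℝ) * Real.log m)
            ≤ ((t:ℝ) * ((h:ℝ)+1)) * ((t:ℝ) * m) :=
          mul_le_mul hb hc (by positivity) (by positivity)
        calc ρ ^ t * ((t:ℝ) * h + 1) * ((t:ℝ) * Real.log m)
            = ρ ^ t * (((t:ℝ) * h + 1) * ((t:ℝ) * Real.log m)) := by ring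
          _ ≤ ρ ^ t * (((t:ℝ) * ((h:ℝ)+1)) * ((t:ℝ) * m)) :=
              mul_le_mul_of_nonneg_left hmul h0a
          _ = ρ ^ t * ((t:ℝ) * ((h:ℝ)+1)) * ((t:ℝ) * m) := by ring
      have h4 : ρ ^ t * ((t:ℝ) * ((h:ℝ)+1)) * ((t:ℝ) * m)
          = ρ ^ t * ((((h:ℝ)+1) * m) * (t:ℝ)^2) := by ring
      have h5 : (2:ℝ) ≤ ρ ^ t * (2 * (t:ℝ)^2) := by
        have hρt1 : (1:ℝ) ≤ ρ ^ t := one_le_pow₀ hρ1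
        nlinarith
      have hjb' : (j:ℝ) ≤ ρ ^ t * ((((h:ℝ)+1) * m) * (t:ℝ)^2) + 2 := by
        rw [← h4]
        calc (j:ℝ) ≤ ((m ^ t : ℝ) * ((t:ℝ) * h + 1) / ((h : ℝ) + 1) ^ t)
              * Real.log ((m ^ t : ℕ) : ℝ) + 2 := by exact_mod_cast hjb
          _ = ρ ^ t * ((t:ℝ) * h + 1) * ((t:ℝ) * Real.log m) + 2 := by rw [h2]
          _ ≤ ρ ^ t * ((t:ℝ) * ((h:ℝ)+1)) * ((t:ℝ) * m) + 2 := by linarith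
      calc (n t : ℝ) ≤ (j : ℝ) := h1
        _ ≤ ρ ^ t * ((((h:ℝ)+1) * m) * (t:ℝ)^2) + 2 := hjb'
        _ ≤ ρ ^ t * ((((h:ℝ)+1) * m) * (t:ℝ)^2) + ρ ^ t * (2 * (t:ℝ)^2) := by linarith
        _ = ρ ^ t * (D * (t:ℝ)^2) := by rw [hD]; ring
    have hrpow : ((ρ ^ t * (D * (t:ℝ) ^ 2)) : ℝ) ^ (1 / (t:ℝ))
        = ρ * (D ^ (1 / (t:ℝ)) * (((t:ℝ)) ^ (1 / (t:ℝ))) ^ 2) := by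
      have h0a : (0:ℝ) ≤ ρ ^ t := by positivity
      have h0b : (0:ℝ) ≤ D := le_of_lt hD0
      have h0c : (0:ℝ) ≤ (t:ℝ) ^ 2 := by positivity
      rw [Real.mul_rpow h0a (by positivity), Real.mul_rpow h0b h0c,
        rpow_pow_inv (le_of_lt hρ0) ht0]
      congr 1
      congr 1
      rw [← Real.rpow_natCast ((t:ℝ)) 2, ← Real.rpow_mul (by positivity),
        mul_comm ((2:ℕ):ℝ) (1/(t:ℝ)), Real.rpow_mul (by positivity), Real.rpow_natCast]
    rw [← hrpow]
    exact Real.rpow_le_rpow (Nat.cast_nonneg _) hbound (by positivity)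
  -- limits of the bounding functions
  have hDlim : Tendsto (fun t : ℕ => D ^ (1 / (t:ℝ))) atTop (nhds 1) := by
    have := Tendsto.rpow (tendsto_const_nhds (x := D) (f := atTop (α := ℕ)))
      tendsto_one_div_atTop_nhds_zero_nat (Or.inl (ne_of_gt hD0))
    simpa [Real.rpow_zero] using this
  have htlim : Tendsto (fun t : ℕ => ((t:ℝ)) ^ (1 / (t:ℝ))) atTop (nhds 1) :=
    tendsto_rpow_div.comp tendsto_natCast_atTop_atTop
  have huplim : Tendsto (fun t : ℕ => ρ * (D ^ (1 / (t:ℝ)) * (((t:ℝ)) ^ (1 / (t:ℝ))) ^ 2))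
      atTop (nhds ρ) := by
    have := tendsto_const_nhds (x := ρ) (f := atTop (α := ℕ)) |>.mul
      (hDlim.mul (htlim.pow 2))
    simpa using this
  exact tendsto_of_tendsto_of_tendsto_of_le_of_le' tendsto_const_nhds huplim hlowev hupev

/-- the Dilworth rate of the rotational tournament T⃗_m (m odd) is
log₂(2m/(m+1)), i.e. χ(T⃗_m^{∧t})^{1/t} → 2m/(m+1). -/
theorem stmt5 (m : ℕ) (hm : Odd m) (hm0 : 0 < m) :
    Tendsto (fun t : ℕ =>
        (chromNum (andPow (fun i j : ZMod m =>
            ∃ r : ℕ, 1 ≤ r ∧ r ≤ (m - 1) / 2 ∧ j - i = (r : ZMod m)) t) : ℝ) ^ (1 / (t : ℝ)))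
      atTop (nhds ((2 * m : ℝ) / ((m : ℝ) + 1))) := by
  haveI : NeZero m := ⟨hm0.ne'⟩
  obtain ⟨cc, hcc⟩ := hm
  have hmh : m = 2 * ((m - 1) / 2) + 1 := by omega
  have hval : (2 * m : ℝ) / ((m : ℝ) + 1) = (m : ℝ) / ((((m - 1) / 2 : ℕ) : ℝ) + 1) := by
    have hc : ((m - 1) / 2 : ℕ) = cc := by omega
    have hm' : (m : ℝ) = 2 * cc + 1 := by exact_mod_cast congrArg (Nat.cast : ℕ → ℝ) hcc
    rw [hc, hm']
    have h1 : (2 * (cc:ℝ) + 1) + 1 ≠ 0 := by positivity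
    have h2 : (cc:ℝ) + 1 ≠ 0 := by positivity
    field_simp
    ring
  rw [hval]
  exact main_limit m ((m - 1) / 2) hmh
end

section
/- For any digraph G, the non-logarithmic Dilworth rate satisfies r_D(G) ≤ χ_dir(G), i.e., lim_{t→∞} χ(G^{∧t})^{1/t} ≤ χ_dir(G). -/
open Filter

section AuxLemmas
variable {V : Type*}

-- chain targets
lemma chain_targets {R : V → V → Prop} :
    ∀ {a : V} {l : List V}, List.Chain R a l → ∀ x ∈ l, ∃ y, R y x := by
  intro a l
  induction l generalizing a with
  | nil => simp
  | cons b l ih =>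
    intro h x hx
    change List.IsChain R (a :: b :: l) at h
    rw [List.isChain_cons_cons] at h
    rcases List.mem_cons.1 hx with rfl | hx
    · exact ⟨a, h.1⟩
    · exact ih h.2 x hx

lemma not_acyclic_of_transGen {E : V → V → Prop} {U : Set V}
    {R : V → V → Prop} (hR : ∀ a b, R a b → a ∈ U ∧ b ∈ U ∧ E a b)
    {v : V} (h : Relation.TransGen R v v) : ¬ IsAcyclicSet E U := by
  obtain ⟨w, hvw, hwv⟩ := Relation.TransGen.tail'_iff.1 h
  obtain ⟨l, hchain, hlast⟩ := List.exists_isChain_cons_of_relationReflTransGen hvw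
  intro hac
  have hget : ∀ (j : Fin (l.length + 1)) (m : ℕ) (hm : m < (v :: l).length),
      (j : ℕ) = m → (v :: l).get (Fin.cast rfl j) = (v :: l).get ⟨m, hm⟩ :=
    fun j m hm hjm => congrArg _ (Fin.ext hjm)
  refine hac ⟨l.length, fun i => (v :: l).get (Fin.cast rfl i), ?_, ?_⟩
  · intro i
    beta_reduce
    have hmem : (v :: l).get (Fin.cast rfl i) ∈ v :: l := List.get_mem _ _
    rcases List.mem_cons.1 hmem with heq | hmem
    · rw [heq]; exact (hR _ _ hwv).2.1
    · obtain ⟨y, hy⟩ := chain_targets hchain _ hmem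
      exact (hR _ _ hy).2.1
  · intro i
    beta_reduce
    have hcg : (∀ h : 0 < l.length, R v (l.get ⟨0, h⟩)) ∧
        ∀ (i : ℕ) (h : i < l.length - 1), R (l.get ⟨i, by omega⟩) (l.get ⟨i + 1, by omega⟩) := by
      have := List.isChain_iff_getElem.1 hchain
      exact ⟨fun h => this 0 (by simp; omega), fun i h => this (i + 1) (by simp; omega)⟩
    rcases Nat.lt_or_ge (i : ℕ) l.length with hi | hi
    · have hval : ((i + 1 : Fin (l.length + 1)) : ℕ) = (i : ℕ) + 1 := by
        have h2 : ((i + 1 : Fin (l.length + 1)) : ℕ) = ((i : ℕ) + 1) % (l.length + 1) := by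
          simp [Fin.add_def]
        rw [h2, Nat.mod_eq_of_lt (by omega)]
      rw [hget (i + 1) ((i : ℕ) + 1) (by simp; omega) hval]
      rcases Nat.eq_zero_or_pos (i : ℕ) with h0 | h0
      · rw [hget i 0 (by simp) h0]
        have hstep := hcg.1 (by omega)
        have e1 : (v :: l).get ⟨0, by simp⟩ = v := rfl
        have e2 : (v :: l).get ⟨(i : ℕ) + 1, by simp; omega⟩ = l.get ⟨(i : ℕ), by omega⟩ := rfl
        rw [e1, e2]
        have e3 : l.get ⟨(i : ℕ), by omega⟩ = l.get ⟨0, by omega⟩ :=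
          congrArg _ (Fin.ext h0)
        rw [e3]
        exact (hR _ _ hstep).2.2
      · obtain ⟨j, hj⟩ : ∃ j, (i : ℕ) = j + 1 := ⟨(i : ℕ) - 1, by omega⟩
        rw [hget i (j + 1) (by simp; omega) hj]
        have e1 : (v :: l).get ⟨j + 1, by simp; omega⟩ = l.get ⟨j, by omega⟩ := rfl
        have e2 : (v :: l).get ⟨(i : ℕ) + 1, by simp; omega⟩ = l.get ⟨(i : ℕ), by omega⟩ := rfl
        rw [e1, e2]
        have e3 : l.get ⟨(i : ℕ), by omega⟩ = l.get ⟨j + 1, by omega⟩ :=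
          congrArg _ (Fin.ext hj)
        rw [e3]
        exact (hR _ _ (hcg.2 j (by omega))).2.2
    · have hieq : (i : ℕ) = l.length := by omega
      have hval : ((i + 1 : Fin (l.length + 1)) : ℕ) = 0 := by
        have h2 : ((i + 1 : Fin (l.length + 1)) : ℕ) = ((i : ℕ) + 1) % (l.length + 1) := by
          simp [Fin.add_def]
        rw [h2, hieq, Nat.mod_self]
      rw [hget (i + 1) 0 (by simp) hval, hget i l.length (by simp) hieq]
      have e1 : (v :: l).get ⟨0, by simp⟩ = v := rfl
      have e2 : (v :: l).get ⟨l.length, by simp⟩ = (v :: l).getLast (List.cons_ne_nil _ _) := by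
        rw [List.getLast_eq_getElem]
        rfl
      rw [e1, e2, hlast]
      exact (hR _ _ hwv).2.2

lemma exists_rank [Fintype V] (E : V → V → Prop) {k : ℕ} (cc : V → Fin k)
    (hcc : ∀ j, IsAcyclicSet E {v | cc v = j}) :
    ∃ ρ : V → ℕ, (∀ v, ρ v ≤ Fintype.card V - 1) ∧
      ∀ u v, cc u = cc v → E u v → ρ u < ρ v := by
  classical
  set R : V → V → Prop := fun u v => cc u = cc v ∧ E u v with hRdef
  have hirr : ∀ v, ¬ Relation.TransGen R v v := by
    intro v hv
    set R' : V → V → Prop := fun a b => cc a = cc v ∧ cc b = cc v ∧ E a b with hR'def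
    have key : ∀ u, Relation.TransGen R u v → Relation.TransGen R' u v := by
      intro u h
      induction h using Relation.TransGen.head_induction_on with
      | single hrel => exact Relation.TransGen.single ⟨hrel.1, rfl, hrel.2⟩
      | head hab _ ih =>
        obtain ⟨b', hbb', _⟩ := Relation.TransGen.head'_iff.1 ih
        exact Relation.TransGen.head ⟨hab.1.trans hbb'.1, hbb'.1, hab.2⟩ ih
    have hcl : ∀ a b, R' a b →
        a ∈ {w | cc w = cc v} ∧ b ∈ {w | cc w = cc v} ∧ E a b := fun a b hab => hab
    exact not_acyclic_of_transGen hcl (key v hv) (hcc (cc v))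
  refine ⟨fun v => (Finset.univ.filter (fun u => Relation.TransGen R u v)).card, ?_, ?_⟩
  · intro v
    have hsub : Finset.univ.filter (fun u => Relation.TransGen R u v) ⊆
        Finset.univ.erase v := by
      intro u hu
      simp only [Finset.mem_filter] at hu
      refine Finset.mem_erase.2 ⟨?_, Finset.mem_univ _⟩
      rintro rfl
      exact hirr u hu.2
    calc (Finset.univ.filter (fun u => Relation.TransGen R u v)).card
        ≤ (Finset.univ.erase v).card := Finset.card_le_card hsub
      _ = Fintype.card V - 1 := by
          rw [Finset.card_erase_of_mem (Finset.mem_univ _), Finset.card_univ]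
  · intro u v hcuv hEuv
    have hRuv : R u v := ⟨hcuv, hEuv⟩
    apply Finset.card_lt_card
    have hsub : Finset.univ.filter (fun w => Relation.TransGen R w u) ⊆
        Finset.univ.filter (fun w => Relation.TransGen R w v) := by
      intro w hw
      simp only [Finset.mem_filter] at *
      exact ⟨Finset.mem_univ _, hw.2.tail hRuv⟩
    refine (Finset.ssubset_iff_of_subset hsub).2 ⟨u, ?_, ?_⟩
    · simp only [Finset.mem_filter]
      exact ⟨Finset.mem_univ _, Relation.TransGen.single hRuv⟩
    · simp only [Finset.mem_filter]
      rintro ⟨-, hcontra⟩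
      exact hirr u hcontra

lemma chromNum_le_s6 {E : V → V → Prop} {n : ℕ} (c : V → Fin n)
    (h : ∀ u v, E u v → c u ≠ c v) : chromNum E ≤ n :=
  Nat.sInf_le ⟨c, h⟩

lemma chromNum_set_nonempty [Fintype V] (E : V → V → Prop) (t : ℕ) :
    {n : ℕ | ∃ c : (Fin t → V) → Fin n,
      ∀ u v, andPow E t u v → c u ≠ c v}.Nonempty := by
  classical
  refine ⟨Fintype.card (Fin t → V), Fintype.equivFin (Fin t → V), ?_⟩
  intro u v huv hc
  exact huv.1 ((Fintype.equivFin (Fin t → V)).injective hc)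

lemma one_le_chromNum_andPow [Fintype V] [Nonempty V] (E : V → V → Prop) (t : ℕ) :
    1 ≤ chromNum (andPow E t) := by
  by_contra hlt
  push_neg at hlt
  interval_cases h : chromNum (andPow E t)
  have hmem := Nat.sInf_mem (chromNum_set_nonempty E t)
  rw [show sInf {n : ℕ | ∃ c : (Fin t → V) → Fin n,
      ∀ u v, andPow E t u v → c u ≠ c v} = chromNum (andPow E t) from rfl, h] at hmem
  obtain ⟨c, -⟩ := hmem
  exact (c (fun _ => Classical.arbitrary V)).elim0

lemma chromNum_andPow_add [Fintype V] (E : V → V → Prop) (m n : ℕ) :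
    chromNum (andPow E (m + n)) ≤ chromNum (andPow E m) * chromNum (andPow E n) := by
  classical
  obtain ⟨cm, hcm⟩ := Nat.sInf_mem (chromNum_set_nonempty E m)
  obtain ⟨cn, hcn⟩ := Nat.sInf_mem (chromNum_set_nonempty E n)
  refine chromNum_le_s6 (fun x => finProdFinEquiv
    (cm (fun i => x (Fin.castAdd n i)), cn (fun i => x (Fin.natAdd m i)))) ?_
  intro x y hxy hc
  have hpair := finProdFinEquiv.injective hc
  have h1 : cm (fun i => x (Fin.castAdd n i)) = cm (fun i => y (Fin.castAdd n i)) :=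
    congrArg Prod.fst hpair
  have h2 : cn (fun i => x (Fin.natAdd m i)) = cn (fun i => y (Fin.natAdd m i)) :=
    congrArg Prod.snd hpair
  obtain ⟨j, hj⟩ := Function.ne_iff.1 hxy.1
  have hco := hxy.2
  refine Fin.addCases (fun i hij => ?_) (fun i hij => ?_) j hj
  · refine hcm _ _ ⟨?_, fun i' => hco _⟩ h1
    exact fun hfeq => hij (congrFun hfeq i)
  · refine hcn _ _ ⟨?_, fun i' => hco _⟩ h2
    exact fun hfeq => hij (congrFun hfeq i)

lemma dichrom_set_nonempty [Fintype V] (E : V → V → Prop) (hE : ∀ v, ¬ E v v) :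
    {n : ℕ | ∃ c : V → Fin n, ∀ k : Fin n, IsAcyclicSet E {v | c v = k}}.Nonempty := by
  classical
  refine ⟨Fintype.card V, Fintype.equivFin V, ?_⟩
  intro k
  rintro ⟨n, c, hmem, hedge⟩
  have h01 : c 0 = c (0 + 1) :=
    (Fintype.equivFin V).injective ((hmem 0).trans (hmem (0 + 1)).symm)
  exact hE (c 0) (h01 ▸ hedge 0)

lemma one_le_dichromNum [Fintype V] [Nonempty V] (E : V → V → Prop) (hE : ∀ v, ¬ E v v) :
    1 ≤ dichromNum E := by
  by_contra hlt
  push_neg at hlt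
  interval_cases h : dichromNum E
  have hmem := Nat.sInf_mem (dichrom_set_nonempty E hE)
  rw [show sInf {n : ℕ | ∃ c : V → Fin n, ∀ k : Fin n, IsAcyclicSet E {v | c v = k}}
      = dichromNum E from rfl, h] at hmem
  obtain ⟨c, -⟩ := hmem
  exact (c (Classical.arbitrary V)).elim0

lemma chromNum_andPow_le_dichrom [Fintype V] [Nonempty V] (E : V → V → Prop)
    (hE : ∀ v, ¬ E v v) (t : ℕ) :
    chromNum (andPow E t) ≤
      dichromNum E ^ t * (t * (Fintype.card V - 1) + 1) := by
  classical
  obtain ⟨cc, hcc⟩ := Nat.sInf_mem (dichrom_set_nonempty E hE)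
  obtain ⟨ρ, hρ_le, hρ_lt⟩ := exists_rank E cc hcc
  set k := dichromNum E with hk
  set B := t * (Fintype.card V - 1) + 1 with hB
  have hcard : Fintype.card ((Fin t → Fin k) × Fin B) = k ^ t * B := by
    simp
  let e := Fintype.equivFinOfCardEq hcard
  have hsum : ∀ x : Fin t → V, ∑ i, ρ (x i) < B := by
    intro x
    have h1 : ∑ i, ρ (x i) ≤ ∑ _i : Fin t, (Fintype.card V - 1) :=
      Finset.sum_le_sum (fun i _ => hρ_le _)
    have h2 : ∑ _i : Fin t, (Fintype.card V - 1) = t * (Fintype.card V - 1) := by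
      simp [Finset.sum_const, mul_comm]
    omega
  refine chromNum_le_s6
    (fun x => e ((fun i => cc (x i)), ⟨∑ i, ρ (x i), hsum x⟩)) ?_
  intro x y hxy hc
  have hpair := e.injective hc
  have hfun : (fun i => cc (x i)) = (fun i => cc (y i)) := congrArg Prod.fst hpair
  have hsumeq : ∑ i, ρ (x i) = ∑ i, ρ (y i) :=
    congrArg Fin.val (congrArg Prod.snd hpair)
  have hle : ∀ i, ρ (x i) ≤ ρ (y i) := by
    intro i
    rcases hxy.2 i with heq | hedge
    · exact le_of_eq (congrArg ρ heq)
    · exact le_of_lt (hρ_lt _ _ (congrFun hfun i) hedge)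
  obtain ⟨j, hj⟩ := Function.ne_iff.1 hxy.1
  have hstrict : ρ (x j) < ρ (y j) := by
    rcases hxy.2 j with heq | hedge
    · exact absurd heq hj
    · exact hρ_lt _ _ (congrFun hfun j) hedge
  have : ∑ i, ρ (x i) < ∑ i, ρ (y i) :=
    Finset.sum_lt_sum (fun i _ => hle i) ⟨j, Finset.mem_univ j, hstrict⟩
  exact absurd hsumeq (ne_of_lt this)

end AuxLemmas

/-- r_D(G) = lim χ(G^{∧t})^{1/t} exists and is at most χ_dir(G). -/
theorem stmt6 {V : Type*} [Fintype V] [Nonempty V]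
    (E : V → V → Prop) (hE : ∀ v, ¬ E v v) :
    ∃ r : ℝ,
      Tendsto (fun t : ℕ => (chromNum (andPow E t) : ℝ) ^ (1 / (t : ℝ))) atTop (nhds r) ∧
      r ≤ (dichromNum E : ℝ) := by
  classical
  set N := Fintype.card V with hN
  set k := dichromNum E with hk
  have hk1 : 1 ≤ k := one_le_dichromNum E hE
  have hχ1 : ∀ t, 1 ≤ chromNum (andPow E t) := fun t => one_le_chromNum_andPow E t
  have hχpos : ∀ t, (0 : ℝ) < (chromNum (andPow E t) : ℝ) := fun t => by
    exact_mod_cast hχ1 t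
  set u : ℕ → ℝ := fun t => Real.log (chromNum (andPow E t)) with hu
  have hu0 : ∀ t, 0 ≤ u t := fun t => Real.log_nonneg (by exact_mod_cast hχ1 t)
  have hsub : Subadditive u := by
    intro m n
    have hmul : chromNum (andPow E (m + n)) ≤
        chromNum (andPow E m) * chromNum (andPow E n) := chromNum_andPow_add E m n
    have h1 : u (m + n) ≤ Real.log ((chromNum (andPow E m) : ℝ) *
        (chromNum (andPow E n) : ℝ)) := by
      apply Real.log_le_log (hχpos _)
      exact_mod_cast hmul
    rwa [Real.log_mul (ne_of_gt (hχpos m)) (ne_of_gt (hχpos n))] at h1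
  have hbdd : BddBelow (Set.range fun n : ℕ => u n / n) := by
    refine ⟨0, ?_⟩
    rintro x ⟨n, rfl⟩
    exact div_nonneg (hu0 n) (Nat.cast_nonneg n)
  refine ⟨Real.exp hsub.lim, ?_, ?_⟩
  · have hlim := hsub.tendsto_lim hbdd
    have hcomp := (Real.continuous_exp.tendsto _).comp hlim
    apply hcomp.congr
    intro t
    simp only [Function.comp]
    rw [Real.rpow_def_of_pos (hχpos t), mul_one_div]
  · have hkpos : (0 : ℝ) < (k : ℝ) := by exact_mod_cast hk1
    rw [← Real.exp_log hkpos]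
    apply Real.exp_le_exp.2
    set g : ℕ → ℝ := fun t => Real.log ((t * (N - 1) + 1 : ℕ)) / t with hg
    have hbound : ∀ t : ℕ, t ≠ 0 → hsub.lim ≤ Real.log k + g t := by
      intro t ht
      have htpos : (0 : ℝ) < (t : ℝ) := by exact_mod_cast Nat.pos_of_ne_zero ht
      have hBpos : (0 : ℝ) < ((t * (N - 1) + 1 : ℕ) : ℝ) := by positivity
      have h2 : u t ≤ t * Real.log k + Real.log ((t * (N - 1) + 1 : ℕ)) := by
        have hineq : chromNum (andPow E t) ≤ k ^ t * (t * (N - 1) + 1) :=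
          chromNum_andPow_le_dichrom E hE t
        have hlog : u t ≤ Real.log ((k : ℝ) ^ t * ((t * (N - 1) + 1 : ℕ) : ℝ)) := by
          apply Real.log_le_log (hχpos t)
          push_cast
          exact_mod_cast hineq
        rwa [Real.log_mul (by positivity) (ne_of_gt hBpos), Real.log_pow] at hlog
      calc hsub.lim ≤ u t / t := hsub.lim_le_div hbdd ht
        _ ≤ (t * Real.log k + Real.log ((t * (N - 1) + 1 : ℕ))) / t := by
            apply div_le_div_of_nonneg_right h2 htpos.le
        _ = Real.log k + g t := by
            rw [hg]
            field_simp
    have hlog_div : Tendsto (fun t : ℕ => Real.log t / (t : ℝ)) atTop (nhds 0) :=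
      (Real.isLittleO_log_id_atTop.tendsto_div_nhds_zero).comp
        tendsto_natCast_atTop_atTop
    have hh : Tendsto (fun t : ℕ => Real.log N / t + Real.log t / (t : ℝ)) atTop (nhds 0) := by
      have := (tendsto_const_div_atTop_nhds_zero_nat (Real.log N)).add hlog_div
      simpa using this
    have hg0 : Tendsto g atTop (nhds 0) := by
      apply tendsto_of_tendsto_of_tendsto_of_le_of_le' tendsto_const_nhds hh
      · filter_upwards with t
        exact div_nonneg (Real.log_nonneg (by exact_mod_cast Nat.le_add_left 1 _))
          (Nat.cast_nonneg t)
      · filter_upwards [eventually_ge_atTop 1] with t ht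
        have htpos : (0 : ℝ) < (t : ℝ) := by exact_mod_cast ht
        have harg : ((t * (N - 1) + 1 : ℕ) : ℝ) ≤ (N : ℝ) * t := by
          have hNn : 1 ≤ N := Fintype.card_pos
          have h1 : t * (N - 1) + 1 ≤ t * (N - 1) + t := by omega
          have h2 : t * (N - 1) + t = t * N := by
            have h3 : N - 1 + 1 = N := Nat.succ_pred_eq_of_pos hNn
            calc t * (N - 1) + t = t * (N - 1 + 1) := by rw [Nat.mul_succ]
              _ = t * N := by rw [h3]
          have : t * (N - 1) + 1 ≤ N * t :=
            (h1.trans h2.le).trans_eq (Nat.mul_comm t N)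
          exact_mod_cast this
        have hNt : (0 : ℝ) < (N : ℝ) * t := by
          have : (0 : ℝ) < (N : ℝ) := by exact_mod_cast Fintype.card_pos
          positivity
        calc g t ≤ Real.log ((N : ℝ) * t) / t := by
              apply div_le_div_of_nonneg_right _ htpos.le
              apply Real.log_le_log (by positivity) harg
          _ = Real.log N / t + Real.log t / (t : ℝ) := by
              rw [Real.log_mul (by exact_mod_cast Fintype.card_pos.ne') (ne_of_gt htpos),
                add_div]
    have hfinal : Tendsto (fun t : ℕ => Real.log k + g t) atTop (nhds (Real.log k)) := by
      simpa using (tendsto_const_nhds (x := Real.log (k : ℝ)) (f := atTop)).add hg0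
    exact ge_of_tendsto hfinal
      (eventually_atTop.2 ⟨1, fun t ht => hbound t (by omega)⟩)
end

section
/- The fractional dichromatic number is submultiplicative with respect to the AND product: for any digraphs F and G, χ_{dir,f}(F∧G) ≤ χ_{dir,f}(F)·χ_{dir,f}(G). -/
open Filter

namespace AuxCW
variable {V : Type*} {E : V → V → Prop} {U : Set V}

lemma getLastD_map {W : Type*} (f : V → W) :
    ∀ (l : List V) (a : V), (l.map f).getLastD (f a) = f (l.getLastD a) := by
  intro l
  induction l with
  | nil => intro a; rfl
  | cons b l ih => intro a; rw [List.map_cons, List.getLastD_cons, List.getLastD_cons]; exact ih b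

lemma getLastD_mem : ∀ (l : List V) (a : V), l.getLastD a ∈ a :: l := by
  intro l
  induction l with
  | nil => intro a; exact List.mem_cons_self
  | cons b l ih =>
    intro a
    rw [List.getLastD_cons]
    exact List.mem_cons_of_mem _ (ih b)

lemma getLastD_concat (b : V) : ∀ (l : List V) (a : V), (l ++ [b]).getLastD a = b := by
  intro l
  induction l with
  | nil => intro a; rfl
  | cons c l ih => intro a; rw [List.cons_append, List.getLastD_cons]; exact ih c

lemma chain_concat {R : V → V → Prop} (b : V) :
    ∀ (l : List V) (a : V), List.Chain R a (l ++ [b]) ↔ List.Chain R a l ∧ R (l.getLastD a) b := by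
  intro l
  induction l with
  | nil =>
    intro a
    constructor
    · intro h; rw [List.nil_append, List.Chain, List.chain_cons] at h; exact ⟨List.Chain.nil, h.1⟩
    · intro h; rw [List.nil_append]; exact List.chain_cons.2 ⟨h.2, List.Chain.nil⟩
  | cons c l ih =>
    intro a
    unfold List.Chain at ih ⊢
    rw [List.cons_append, List.chain_cons, List.chain_cons, ih c, List.getLastD_cons]
    tauto

/-- contraction of an eq-or-edge chain to an edge chain -/
lemma contract : ∀ (l : List V) (a : V), List.Chain (fun x y => x = y ∨ E x y) a l →
    ∃ m : List V, List.Chain E a m ∧ m.getLastD a = l.getLastD a ∧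
      (∀ x ∈ m, x ∈ l) ∧ (∀ x ∈ l, x = a ∨ x ∈ m) := by
  intro l
  induction l with
  | nil => intro a _; exact ⟨[], List.Chain.nil, rfl, by simp, by simp⟩
  | cons b l ih =>
    intro a h
    rw [List.Chain, List.chain_cons] at h
    obtain ⟨h1, h2⟩ := h
    obtain ⟨m, hc, hl, hs, he⟩ := ih b h2
    rcases h1 with heq | hEab
    · subst heq
      refine ⟨m, hc, ?_, fun x hx => List.mem_cons_of_mem _ (hs x hx), ?_⟩
      · rw [List.getLastD_cons]; exact hl
      · intro x hx
        rcases List.mem_cons.1 hx with rfl | hx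
        · exact Or.inl rfl
        · exact he x hx
    · refine ⟨b :: m, List.chain_cons.2 ⟨hEab, hc⟩, ?_, ?_, ?_⟩
      · rw [List.getLastD_cons, List.getLastD_cons]; exact hl
      · intro x hx
        rcases List.mem_cons.1 hx with rfl | hx
        · exact List.mem_cons_self
        · exact List.mem_cons_of_mem _ (hs x hx)
      · intro x hx
        rcases List.mem_cons.1 hx with rfl | hx
        · exact Or.inr List.mem_cons_self
        · rcases he x hx with h | h
          · exact Or.inr (h ▸ List.mem_cons_self)
          · exact Or.inr (List.mem_cons_of_mem _ h)

lemma get_cons_length : ∀ (l : List V) (a : V) (h : l.length < (a :: l).length),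
    (a :: l).get ⟨l.length, h⟩ = l.getLastD a := by
  intro l
  induction l with
  | nil => intro a h; rfl
  | cons b l ih =>
    intro a h
    rw [List.getLastD_cons]
    exact ih b (by simp)

lemma chain_get {R : V → V → Prop} :
    ∀ (l : List V) (a : V), List.Chain R a l →
      ∀ (i : ℕ) (h : i + 1 < (a :: l).length),
        R ((a :: l).get ⟨i, Nat.lt_of_succ_lt h⟩) ((a :: l).get ⟨i + 1, h⟩) := by
  intro l
  induction l with
  | nil => intro a _ i h; simp at h
  | cons b l ih =>
    intro a hch i h
    rw [List.Chain, List.chain_cons] at hch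
    match i with
    | 0 => exact hch.1
    | (j+1) => exact ih b hch.2 j (by simpa using h)

lemma chain_of_get {R : V → V → Prop} :
    ∀ (l : List V) (a : V),
      (∀ (i : ℕ) (h : i + 1 < (a :: l).length),
        R ((a :: l).get ⟨i, Nat.lt_of_succ_lt h⟩) ((a :: l).get ⟨i + 1, h⟩)) →
      List.Chain R a l := by
  intro l
  induction l with
  | nil => intro a _; exact List.Chain.nil
  | cons b l ih =>
    intro a h
    refine List.chain_cons.2 ⟨h 0 (by simp), ih b ?_⟩
    intro i hi
    exact h (i+1) (by simpa using hi)

/-- list closed walk implies not acyclic -/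
lemma not_acyclic_of_list (a : V) (l : List V) (hmem : ∀ x ∈ a :: l, x ∈ U)
    (hc : List.Chain E a l) (hcl : E (l.getLastD a) a) : ¬ IsAcyclicSet E U := by
  intro hacy
  apply hacy
  refine ⟨l.length, fun i => (a :: l).get ⟨i.1, by have := i.2; simp; omega⟩, ?_, ?_⟩
  · intro i; exact hmem _ (List.get_mem _ _)
  · intro i
    by_cases hi : i = Fin.last l.length
    · subst hi
      rw [Fin.last_add_one]
      have h0 : ((Fin.last l.length : Fin (l.length + 1)) : ℕ) = l.length := rfl
      simp only [h0, Fin.val_zero]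
      rw [get_cons_length l a (by simp)]
      exact hcl
    · have h1 : ((i : Fin (l.length + 1)) + 1).1 = i.1 + 1 := by
        rw [Fin.val_add_one, if_neg hi]
      have hlt : i.1 + 1 < (a :: l).length := by
        simp only [List.length_cons]
        have := Fin.val_lt_last hi
        omega
      simp only [h1]
      exact chain_get l a hc i.1 hlt

/-- not acyclic implies list closed walk -/
lemma list_of_not_acyclic (h : ¬ IsAcyclicSet E U) :
    ∃ (a : V) (l : List V), (∀ x ∈ a :: l, x ∈ U) ∧ List.Chain E a l ∧ E (l.getLastD a) a := by
  rw [IsAcyclicSet, not_not] at h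
  obtain ⟨n, c, hmem, hstep⟩ := h
  set l : List V := List.ofFn (fun i : Fin n => c i.succ) with hldef
  have hL : c 0 :: l = List.ofFn c := (List.ofFn_succ (f := c)).symm
  have hlen : l.length = n := by rw [hldef, List.length_ofFn]
  have hget : ∀ (j : ℕ) (hj : j < n + 1) (hj2 : j < (c 0 :: l).length),
      (c 0 :: l).get ⟨j, hj2⟩ = c ⟨j, hj⟩ := by
    intro j hj hj2
    rw [List.get_of_eq hL ⟨j, hj2⟩, List.get_ofFn]
    exact congrArg c (Fin.ext rfl)
  refine ⟨c 0, l, ?_, ?_, ?_⟩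
  · intro x hx
    rw [hL, List.mem_ofFn] at hx
    obtain ⟨i, rfl⟩ := hx
    exact hmem i
  · apply chain_of_get
    intro i hi
    have hi' : i + 1 < n + 1 := by
      rw [List.length_cons, hlen] at hi; exact hi
    rw [hget i (by omega) _, hget (i+1) hi' _]
    have := hstep ⟨i, by omega⟩
    have hadd : (⟨i, by omega⟩ : Fin (n+1)) + 1 = ⟨i + 1, hi'⟩ := by
      ext
      rw [Fin.val_add_one, if_neg]
      intro hc'
      have : i = n := by simpa [Fin.ext_iff] using hc'
      omega
    rwa [hadd] at this
  · have h1 : l.getLastD (c 0) = c (Fin.last n) := by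
      rw [← get_cons_length l (c 0) (by simp)]
      rw [hget l.length (by omega) _]
      exact congrArg c (Fin.ext (by simp [hlen]))
    rw [h1]
    have := hstep (Fin.last n)
    rwa [Fin.last_add_one] at this

end AuxCW
namespace AuxCW

lemma chain_snd {V W : Type*} {E : V → V → Prop} {F : W → W → Prop} :
    ∀ (l : List (V × W)) (a : V × W), (∀ x ∈ a :: l, x.1 = a.1) →
      List.Chain (andProd E F) a l → List.Chain (fun p q : V × W => F p.2 q.2) a l := by
  intro l
  induction l with
  | nil => intro a _ _; exact List.Chain.nil
  | cons b l ih =>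
    intro a hconst hc
    rw [List.Chain, List.chain_cons] at hc
    obtain ⟨⟨hne, hfst, hsnd⟩, h2⟩ := hc
    have hab : a.1 = b.1 := (hconst b (by simp)).symm
    have hsnd' : F a.2 b.2 := by
      rcases hsnd with h | h
      · exact absurd (Prod.ext hab h) hne
      · exact h
    refine List.chain_cons.2 ⟨hsnd', ih b ?_ h2⟩
    intro x hx
    rcases List.mem_cons.1 hx with rfl | hx
    · rfl
    · rw [hconst x (by simp [hx]), hab]

lemma prod_acyclic {V W : Type*} {E : V → V → Prop} {F : W → W → Prop}
    {U : Set V} {T : Set W} (hU : IsAcyclicSet E U) (hT : IsAcyclicSet F T) :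
    IsAcyclicSet (andProd E F) {p : V × W | p.1 ∈ U ∧ p.2 ∈ T} := by
  by_contra h
  obtain ⟨a, l, hmem, hc, hcl⟩ := list_of_not_acyclic h
  by_cases hconst : ∀ x ∈ a :: l, x.1 = a.1
  · -- all first coordinates equal: project onto second coordinate
    have hc2 : List.Chain (fun p q : V × W => F p.2 q.2) a l := chain_snd l a hconst hc
    have hcm : List.Chain F a.2 (l.map Prod.snd) := (List.isChain_map (l := a :: l) Prod.snd).2 hc2
    have hlast : (l.map Prod.snd).getLastD a.2 = (l.getLastD a).2 := getLastD_map Prod.snd l a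
    have hclF : F ((l.map Prod.snd).getLastD a.2) a.2 := by
      rw [hlast]
      obtain ⟨hne, hfst, hsnd⟩ := hcl
      rcases hsnd with h | h
      · exact absurd (Prod.ext (hconst _ (getLastD_mem l a)) h) hne
      · exact h
    refine not_acyclic_of_list a.2 (l.map Prod.snd) ?_ hcm hclF hT
    intro x hx
    rcases List.mem_cons.1 hx with rfl | hx
    · exact (hmem a (by simp)).2
    · obtain ⟨p, hp, rfl⟩ := List.mem_map.1 hx
      exact (hmem p (by simp [hp])).2
  · -- some first coordinate differs: project onto first coordinate and contract
    have hc1 : List.Chain (fun x y : V => x = y ∨ E x y) a.1 (l.map Prod.fst) := by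
      refine (List.isChain_map (l := a :: l) Prod.fst).2 (List.IsChain.imp ?_ hc)
      intro p q hpq
      exact hpq.2.1
    obtain ⟨m, hcm, hml, hms, hme⟩ := contract (l.map Prod.fst) a.1 hc1
    have hlastm : m.getLastD a.1 = (l.getLastD a).1 := by
      rw [hml, getLastD_map Prod.fst l a]
    have hmU : ∀ x ∈ a.1 :: m, x ∈ U := by
      intro x hx
      rcases List.mem_cons.1 hx with rfl | hx
      · exact (hmem a (by simp)).1
      · obtain ⟨p, hp, rfl⟩ := List.mem_map.1 (hms x hx)
        exact (hmem p (by simp [hp])).1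
    rcases List.eq_nil_or_concat m with rfl | ⟨m', b, rfl⟩
    all_goals try rw [List.concat_eq_append] at hcm hml hms hme hlastm hmU
    · -- m empty: all of (map fst l) equals a.1, contradicting hconst
      apply hconst
      intro x hx
      rcases List.mem_cons.1 hx with rfl | hx
      · rfl
      · rcases hme x.1 (List.mem_map.2 ⟨x, hx, rfl⟩) with h | h
        · exact h
        · exact absurd h List.not_mem_nil
    · -- m = m' ++ [b]
      have hb : (m' ++ [b]).getLastD a.1 = b := getLastD_concat b m' a.1
      have hclE : b = a.1 ∨ E b a.1 := by
        have := hcl.2.1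
        rw [← hlastm, hb] at this
        exact this
      rcases hclE with heq | hclE
      · -- b = a.1 : chain a.1 → ... → a.1, use m' with last edge
        rw [chain_concat b m' a.1] at hcm
        refine not_acyclic_of_list a.1 m' ?_ hcm.1 (heq ▸ hcm.2) hU
        intro x hx
        apply hmU x
        rcases List.mem_cons.1 hx with rfl | hx
        · simp
        · simp [hx]
      · -- E b a.1 closes the walk
        refine not_acyclic_of_list a.1 (m' ++ [b]) hmU hcm ?_ hU
        rw [hb]
        exact hclE
def fracSet {V : Type*} [Fintype V] [DecidableEq V] (E : V → V → Prop) : Set ℝ :=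
  {w : ℝ | ∃ g : Finset V → ℝ,
    (∀ U, 0 ≤ g U) ∧
    (∀ U : Finset V, ¬ IsAcyclicSet E (↑U : Set V) → g U = 0) ∧
    (∀ v : V, 1 ≤ ∑ U : Finset V, (if v ∈ U then g U else 0)) ∧
    w = ∑ U : Finset V, g U}

lemma fracD_eq {V : Type*} [Fintype V] (E : V → V → Prop) :
    fracDichromNum E = sInf (@fracSet V _ (Classical.decEq V) E) := rfl

variable {V W : Type*} [Fintype V] [Fintype W] [DecidableEq V] [DecidableEq W]

lemma fracSet_nonneg (E : V → V → Prop) : ∀ x ∈ fracSet E, (0:ℝ) ≤ x := by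
  rintro x ⟨g, hg0, -, -, rfl⟩
  exact Finset.sum_nonneg fun U _ => hg0 U

lemma singleton_acyclic (E : V → V → Prop) (hE : ∀ v, ¬ E v v) (v : V) :
    IsAcyclicSet E (↑({v} : Finset V) : Set V) := by
  rintro ⟨n, c, hmem, hstep⟩
  have h0 : c 0 = v := by simpa using hmem 0
  have h1 : c 1 = v := by simpa using hmem 1
  have := hstep 0
  rw [zero_add, h0, h1] at this
  exact hE v this

lemma fracSet_nonempty (E : V → V → Prop) (hE : ∀ v, ¬ E v v) : (fracSet E).Nonempty := by
  classical
  refine ⟨_, fun U => if ∃ v, U = {v} then 1 else 0, ?_, ?_, ?_, rfl⟩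
  · intro U; dsimp only; split_ifs <;> norm_num
  · intro U hU
    dsimp only
    rw [if_neg]
    rintro ⟨v, rfl⟩
    exact hU (singleton_acyclic E hE v)
  · intro v
    have := Finset.single_le_sum (f := fun U : Finset V => if v ∈ U then (if ∃ w, U = {w} then (1:ℝ) else 0) else 0)
      (fun U _ => by split_ifs <;> norm_num) (Finset.mem_univ ({v} : Finset V))
    refine le_trans ?_ this
    rw [if_pos (Finset.mem_singleton_self v), if_pos ⟨v, rfl⟩]

lemma fracSet_mul {E : V → V → Prop} {F : W → W → Prop} {x y : ℝ}
    (hx : x ∈ fracSet E) (hy : y ∈ fracSet F) :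
    x * y ∈ @fracSet (V × W) _ instDecidableEqProd (andProd E F) := by
  classical
  obtain ⟨g, hg0, hgv, hgc, rfl⟩ := hx
  obtain ⟨h, hh0, hhv, hhc, rfl⟩ := hy
  refine ⟨fun S => ∑ U : Finset V, ∑ T : Finset W, if S = U ×ˢ T then g U * h T else 0,
    ?_, ?_, ?_, ?_⟩
  · intro S
    refine Finset.sum_nonneg fun U _ => Finset.sum_nonneg fun T _ => ?_
    split_ifs
    · exact mul_nonneg (hg0 U) (hh0 T)
    · exact le_refl 0
  · intro S hS
    refine Finset.sum_eq_zero fun U _ => Finset.sum_eq_zero fun T _ => ?_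
    split_ifs with hSe
    · subst hSe
      by_cases hgU : g U = 0
      · rw [hgU, zero_mul]
      by_cases hhT : h T = 0
      · rw [hhT, mul_zero]
      exfalso
      have hUa : IsAcyclicSet E (↑U : Set V) := by
        by_contra hA; exact hgU (hgv U hA)
      have hTa : IsAcyclicSet F (↑T : Set W) := by
        by_contra hA; exact hhT (hhv T hA)
      apply hS
      have hset : (↑(U ×ˢ T) : Set (V × W)) = {p : V × W | p.1 ∈ (↑U : Set V) ∧ p.2 ∈ (↑T : Set W)} := by
        ext p; simp [Finset.mem_product]
      rw [hset]
      exact prod_acyclic hUa hTa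
    · rfl
  · intro p
    have h1 : ∀ S : Finset (V × W),
        (if p ∈ S then (∑ U : Finset V, ∑ T : Finset W, if S = U ×ˢ T then g U * h T else 0) else 0)
          = ∑ U : Finset V, ∑ T : Finset W,
              (if S = U ×ˢ T then (if p ∈ U ×ˢ T then g U * h T else 0) else 0) := by
      intro S
      by_cases hp : p ∈ S
      · rw [if_pos hp]
        refine Finset.sum_congr rfl fun U _ => Finset.sum_congr rfl fun T _ => ?_
        by_cases hSe : S = U ×ˢ T
        · subst hSe; rw [if_pos rfl, if_pos rfl, if_pos hp]
        · rw [if_neg hSe, if_neg hSe]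
      · rw [if_neg hp]
        symm
        refine Finset.sum_eq_zero fun U _ => Finset.sum_eq_zero fun T _ => ?_
        by_cases hSe : S = U ×ˢ T
        · subst hSe; rw [if_pos rfl, if_neg hp]
        · rw [if_neg hSe]
    calc (1:ℝ) = 1 * 1 := (one_mul 1).symm
      _ ≤ (∑ U : Finset V, if p.1 ∈ U then g U else 0) * (∑ T : Finset W, if p.2 ∈ T then h T else 0) := by
          exact mul_le_mul (hgc p.1) (hhc p.2) zero_le_one (le_trans zero_le_one (hgc p.1))
      _ = ∑ U : Finset V, ∑ T : Finset W,
            (if p.1 ∈ U then g U else 0) * (if p.2 ∈ T then h T else 0) := Finset.sum_mul_sum _ _ _ _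
      _ = ∑ U : Finset V, ∑ T : Finset W, (if p ∈ U ×ˢ T then g U * h T else 0) := by
          refine Finset.sum_congr rfl fun U _ => Finset.sum_congr rfl fun T _ => ?_
          by_cases hA : p.1 ∈ U <;> by_cases hB : p.2 ∈ T <;>
            simp [Finset.mem_product, hA, hB]
      _ = ∑ U : Finset V, ∑ T : Finset W, ∑ S : Finset (V × W),
            (if S = U ×ˢ T then (if p ∈ U ×ˢ T then g U * h T else 0) else 0) := by
          refine Finset.sum_congr rfl fun U _ => Finset.sum_congr rfl fun T _ => ?_
          rw [Finset.sum_ite_eq' Finset.univ (U ×ˢ T), if_pos (Finset.mem_univ _)]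
      _ = ∑ S : Finset (V × W), ∑ U : Finset V, ∑ T : Finset W,
            (if S = U ×ˢ T then (if p ∈ U ×ˢ T then g U * h T else 0) else 0) := by
          exact (Finset.sum_congr rfl fun U _ => Finset.sum_comm).trans Finset.sum_comm
      _ = ∑ S : Finset (V × W),
            (if p ∈ S then (∑ U : Finset V, ∑ T : Finset W, if S = U ×ˢ T then g U * h T else 0) else 0) := by
          refine Finset.sum_congr rfl fun S _ => (h1 S).symm
  · calc (∑ U : Finset V, g U) * (∑ T : Finset W, h T)
        = ∑ U : Finset V, ∑ T : Finset W, g U * h T := Finset.sum_mul_sum _ _ _ _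
      _ = ∑ U : Finset V, ∑ T : Finset W, ∑ S : Finset (V × W), (if S = U ×ˢ T then g U * h T else 0) := by
          refine Finset.sum_congr rfl fun U _ => Finset.sum_congr rfl fun T _ => ?_
          rw [Finset.sum_ite_eq' Finset.univ (U ×ˢ T), if_pos (Finset.mem_univ _)]
      _ = ∑ S : Finset (V × W), ∑ U : Finset V, ∑ T : Finset W, (if S = U ×ˢ T then g U * h T else 0) := by
          exact (Finset.sum_congr rfl fun U _ => Finset.sum_comm).trans Finset.sum_comm

end AuxCW

/-- χ_{dir,f}(F∧G) ≤ χ_{dir,f}(F)·χ_{dir,f}(G). -/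
theorem stmt10 {V W : Type*} [Fintype V] [Nonempty V] [Fintype W] [Nonempty W]
    (E : V → V → Prop) (F : W → W → Prop)
    (hE : ∀ v, ¬ E v v) (hF : ∀ w, ¬ F w w) :
    fracDichromNum (andProd E F) ≤ fracDichromNum E * fracDichromNum F := by
  letI iV : DecidableEq V := Classical.decEq V
  letI iW : DecidableEq W := Classical.decEq W
  rw [AuxCW.fracD_eq, AuxCW.fracD_eq, AuxCW.fracD_eq]
  have hinst : (Classical.decEq (V × W)) = instDecidableEqProd := Subsingleton.elim _ _
  have hSetEq : @AuxCW.fracSet (V × W) _ (Classical.decEq _) (andProd E F)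
      = @AuxCW.fracSet (V × W) _ instDecidableEqProd (andProd E F) := by
    rw [hinst]
  have hEqV : @AuxCW.fracSet V _ (Classical.decEq V) E = AuxCW.fracSet E := by
    congr 1
  have hEqW : @AuxCW.fracSet W _ (Classical.decEq W) F = AuxCW.fracSet F := by
    congr 1
  rw [hSetEq, hEqV, hEqW]
  set C := @AuxCW.fracSet (V × W) _ instDecidableEqProd (andProd E F) with hC
  set a := sInf (AuxCW.fracSet E) with ha
  set b := sInf (AuxCW.fracSet F) with hb
  have ha0 : 0 ≤ a := Real.sInf_nonneg (AuxCW.fracSet_nonneg E)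
  have hb0 : 0 ≤ b := Real.sInf_nonneg (AuxCW.fracSet_nonneg F)
  have hCbdd : BddBelow C := ⟨0, fun x hx => AuxCW.fracSet_nonneg _ x hx⟩
  apply le_of_forall_pos_le_add
  intro ε hε
  set δ := min 1 (ε / (a + b + 2)) with hδ
  have hδ0 : 0 < δ := lt_min one_pos (div_pos hε (by linarith))
  obtain ⟨x, hxA, hxlt⟩ := Real.lt_sInf_add_pos (AuxCW.fracSet_nonempty E hE) hδ0
  obtain ⟨y, hyB, hylt⟩ := Real.lt_sInf_add_pos (AuxCW.fracSet_nonempty F hF) hδ0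
  have hxy : x * y ∈ C := AuxCW.fracSet_mul hxA hyB
  have hle : sInf C ≤ x * y := csInf_le hCbdd hxy
  have hx0 : 0 ≤ x := AuxCW.fracSet_nonneg E x hxA
  have hy0 : 0 ≤ y := AuxCW.fracSet_nonneg F y hyB
  have hδ1 : δ ≤ 1 := min_le_left _ _
  have hδ2 : δ * (a + b + 2) ≤ ε := by
    have := min_le_right 1 (ε / (a + b + 2))
    calc δ * (a + b + 2) ≤ (ε / (a + b + 2)) * (a + b + 2) := by
          apply mul_le_mul_of_nonneg_right this (by linarith)
      _ = ε := by field_simp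
  have hxyb : x * y ≤ (a + δ) * (b + δ) :=
    mul_le_mul (le_of_lt hxlt) (le_of_lt hylt) hy0 (by linarith)
  nlinarith [hle, hxyb, hδ2, hδ1, hδ0.le, ha0, hb0]
end
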